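/- arXiv:0909.0589 — 7 statements merged into one kernel-verified Lean document; each statement's English description precedes it below -/
import Mathlib

section
/- For every integer n ≥ 1, the image of the map β*_{n,n-1} : F_2^{[Ω]^{n-1}} → F_2^{[Ω]^n} is equal to the kernel of the map β*_{n+1,n} : F_2^{[Ω]^n} → F_2^{[Ω]^{n+1}}. -/
/-- The set of `m`-element subsets of `Ω`. -/
abbrev NSubsets (Ω : Type*) (m : ℕ) := {s : Finset Ω // s.card = m}

/-- The dual map `β*_{m,j} : F₂^{[Ω]^j} → F₂^{[Ω]^m}`,
`(β*_{m,j} f)(ω) = Σ_{x ∈ [ω]^j} f(x)`. -/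
noncomputable def betaStar (Ω : Type*) (m j : ℕ) :
    (NSubsets Ω j → ZMod 2) →ₗ[ZMod 2] (NSubsets Ω m → ZMod 2) where
  toFun f := fun ω => ∑ x ∈ (Finset.powersetCard j ω.1).attach,
      f ⟨x.1, (Finset.mem_powersetCard.mp x.2).2⟩
  map_add' f g := by
    funext ω
    simp [Finset.sum_add_distrib]
  map_smul' c f := by
    funext ω
    simp [Finset.mul_sum, smul_eq_mul]

/-- The map `β_{m,j} : F₂[Ω]^m → F₂[Ω]^j` on the free modules, sending a basis
element `ω ∈ [Ω]^m` to `Σ_{ω' ∈ [ω]^j} ω'`. -/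
noncomputable def beta (Ω : Type*) (m j : ℕ) :
    (NSubsets Ω m →₀ ZMod 2) →ₗ[ZMod 2] (NSubsets Ω j →₀ ZMod 2) :=
  Finsupp.lsum (ZMod 2) fun ω =>
    ∑ x ∈ (Finset.powersetCard j ω.1).attach,
      Finsupp.lsingle ⟨x.1, (Finset.mem_powersetCard.mp x.2).2⟩

/-- The natural action of a permutation of `Ω` on `m`-element subsets of `Ω`. -/
def permImage {Ω : Type*} [DecidableEq Ω] (σ : Equiv.Perm Ω) {n : ℕ}
    (w : NSubsets Ω n) : NSubsets Ω n :=
  ⟨w.1.image σ, by rw [Finset.card_image_of_injective _ σ.injective, w.2]⟩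

/-- `V_{B,A}`: functions on `[Ω]^{n-1}` vanishing at every `w` with `w ∩ A ≠ B`. -/
def VBA (Ω : Type*) [DecidableEq Ω] (n : ℕ) (A B : Finset Ω) :
    Submodule (ZMod 2) (NSubsets Ω (n - 1) → ZMod 2) where
  carrier := {f | ∀ w : NSubsets Ω (n - 1), w.1 ∩ A ≠ B → f w = 0}
  add_mem' := by
    intro f g hf hg w hw
    simp only [Pi.add_apply, hf w hw, hg w hw, add_zero]
  zero_mem' := fun w _ => rfl
  smul_mem' := by
    intro c f hf w hw
    simp only [Pi.smul_apply, hf w hw, smul_zero]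

/-- `V_A`: the sum of the subspaces `V_{B,A}` over `B ⊆ A` with `|B| < n - 1`. -/
def VA (Ω : Type*) [DecidableEq Ω] (n : ℕ) (A : Finset Ω) :
    Submodule (ZMod 2) (NSubsets Ω (n - 1) → ZMod 2) :=
  ⨆ B ∈ {B : Finset Ω | B ⊆ A ∧ B.card < n - 1}, VBA Ω n A B

/-- `W_A = β*_{n,n-1}(V_A)`. -/
noncomputable def WA (Ω : Type*) [DecidableEq Ω] (n : ℕ) (A : Finset Ω) :
    Submodule (ZMod 2) (NSubsets Ω n → ZMod 2) :=
  (VA Ω n A).map (betaStar Ω n (n - 1))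

/-- Extend a function on `j`-subsets to all finsets by zero. -/
noncomputable def Eext {Ω : Type*} (j : ℕ) (f : NSubsets Ω j → ZMod 2) : Finset Ω → ZMod 2 :=
  fun x => if h : x.card = j then f ⟨x, h⟩ else 0

lemma betaStar_apply {Ω : Type*} (m j : ℕ) (f : NSubsets Ω j → ZMod 2) (ω : NSubsets Ω m) :
    betaStar Ω m j f ω = ∑ x ∈ Finset.powersetCard j ω.1, Eext j f x := by
  rw [betaStar]
  dsimp only [LinearMap.coe_mk, AddHom.coe_mk]
  rw [← Finset.sum_attach (Finset.powersetCard j ω.1) (Eext j f)]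
  refine Finset.sum_congr rfl fun x _ => ?_
  rw [Eext, dif_pos (Finset.mem_powersetCard.mp x.2).2]

lemma double_sum_zero {Ω : Type*} [DecidableEq Ω] (m : ℕ) (F : Finset Ω → ZMod 2)
    (s : Finset Ω) (hs : s.card = m + 2) :
    ∑ x ∈ Finset.powersetCard (m + 1) s, ∑ y ∈ Finset.powersetCard m x, F y = 0 := by
  rw [← Finset.sum_sigma (Finset.powersetCard (m + 1) s)
    (fun x => Finset.powersetCard m x) (fun p => F p.2)]
  refine Finset.sum_involution (fun p _ => ⟨p.2 ∪ (s \ p.1), p.2⟩) ?_ ?_ ?_ ?_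
  · intro p hp
    exact CharTwo.add_self_eq_zero _
  · -- g_ne
    intro p hp _
    simp only [Finset.mem_sigma, Finset.mem_powersetCard] at hp
    obtain ⟨⟨hxs, hxc⟩, hyx, hyc⟩ := hp
    have h1 : (s \ p.1).Nonempty := by
      rw [← Finset.card_pos, Finset.card_sdiff_of_subset hxs]
      omega
    obtain ⟨c, hc⟩ := h1
    intro h
    have h2 : p.2 ∪ (s \ p.1) = p.1 := congrArg Sigma.fst h
    have : c ∈ p.1 := h2 ▸ Finset.mem_union_right _ hc
    exact (Finset.mem_sdiff.mp hc).2 this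
  · -- g_mem
    intro p hp
    simp only [Finset.mem_sigma, Finset.mem_powersetCard] at hp ⊢
    obtain ⟨⟨hxs, hxc⟩, hyx, hyc⟩ := hp
    have hdisj : Disjoint p.2 (s \ p.1) :=
      (Finset.sdiff_disjoint (s := p.1) (t := s)).symm.mono_left hyx
    refine ⟨⟨Finset.union_subset (hyx.trans hxs) (Finset.sdiff_subset), ?_⟩,
      Finset.subset_union_left, hyc⟩
    rw [Finset.card_union_of_disjoint hdisj, Finset.card_sdiff_of_subset hxs, hyc, hxc, hs]; omega
  · -- g_inv
    intro p hp
    simp only [Finset.mem_sigma, Finset.mem_powersetCard] at hp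
    obtain ⟨⟨hxs, hxc⟩, hyx, hyc⟩ := hp
    have key : s \ (p.2 ∪ (s \ p.1)) = p.1 \ p.2 := by
      ext e
      simp only [Finset.mem_sdiff, Finset.mem_union, not_or, not_and, not_not]
      constructor
      · rintro ⟨hes, hey, hex⟩
        exact ⟨hex hes, hey⟩
      · rintro ⟨hex, hey⟩
        exact ⟨hxs hex, hey, fun _ => hex⟩
    show (⟨p.2 ∪ (s \ (p.2 ∪ (s \ p.1))), p.2⟩ : Σ _ : Finset Ω, Finset Ω) = p
    rw [key, Finset.union_sdiff_of_subset hyx]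

/-- For every integer `n ≥ 1`, the image of `β*_{n,n-1} : F₂^{[Ω]^{n-1}} → F₂^{[Ω]^n}`
equals the kernel of `β*_{n+1,n} : F₂^{[Ω]^n} → F₂^{[Ω]^{n+1}}`. -/
theorem image_betaStar_eq_ker_betaStar
    (Ω : Type) [Countable Ω] [Infinite Ω] (n : ℕ) (hn : 1 ≤ n) :
    LinearMap.range (betaStar Ω n (n - 1)) = LinearMap.ker (betaStar Ω (n + 1) n) := by
  classical
  obtain ⟨m, rfl⟩ : ∃ m, n = m + 1 := ⟨n - 1, by omega⟩
  show LinearMap.range (betaStar Ω (m + 1) m) = LinearMap.ker (betaStar Ω (m + 1 + 1) (m + 1))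
  apply le_antisymm
  · -- range ⊆ ker
    rintro _ ⟨f, rfl⟩
    rw [LinearMap.mem_ker]
    funext ω
    rw [betaStar_apply, Pi.zero_apply]
    rw [show (∑ x ∈ Finset.powersetCard (m + 1) ω.1,
        Eext (m + 1) (betaStar Ω (m + 1) m f) x)
        = ∑ x ∈ Finset.powersetCard (m + 1) ω.1, ∑ y ∈ Finset.powersetCard m x, Eext m f y from
      Finset.sum_congr rfl fun x hx => by
        rw [Eext, dif_pos (Finset.mem_powersetCard.mp hx).2,
          betaStar_apply (m + 1) m f ⟨x, (Finset.mem_powersetCard.mp hx).2⟩]]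
    exact double_sum_zero m (Eext m f) ω.1 ω.2
  · -- ker ⊆ range
    intro g hg
    rw [LinearMap.mem_ker] at hg
    obtain ⟨a⟩ : Nonempty Ω := inferInstance
    set f : NSubsets Ω m → ZMod 2 := fun y =>
      if h : a ∈ y.1 then 0
      else g ⟨insert a y.1, by rw [Finset.card_insert_of_notMem h, y.2]⟩ with hf
    refine ⟨f, ?_⟩
    funext ω
    rw [betaStar_apply]
    by_cases ha : a ∈ ω.1
    · have herase : ω.1.erase a ∈ Finset.powersetCard m ω.1 :=
        Finset.mem_powersetCard.mpr ⟨Finset.erase_subset _ _,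
          by rw [Finset.card_erase_of_mem ha, ω.2]; rfl⟩
      rw [Finset.sum_eq_single (ω.1.erase a)]
      · have hc : (ω.1.erase a).card = m := (Finset.mem_powersetCard.mp herase).2
        rw [Eext, dif_pos hc, hf]
        dsimp only
        rw [dif_neg (Finset.notMem_erase a ω.1)]
        exact congrArg g (Subtype.ext (Finset.insert_erase ha))
      · intro y hy hne
        obtain ⟨hsub, hcard⟩ := Finset.mem_powersetCard.mp hy
        by_cases hay : a ∈ y
        · rw [Eext, dif_pos hcard, hf]
          dsimp only
          rw [dif_pos hay]
        · exfalso
          apply hne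
          apply Finset.eq_of_subset_of_card_le (Finset.subset_erase.mpr ⟨hsub, hay⟩)
          rw [Finset.card_erase_of_mem ha, ω.2, hcard]
          omega
      · intro h
        exact absurd herase h
    · -- a ∉ ω
      have hcard : (insert a ω.1).card = m + 1 + 1 := by
        rw [Finset.card_insert_of_notMem ha, ω.2]
      have key : ∑ x ∈ Finset.powersetCard (m + 1) (insert a ω.1), Eext (m + 1) g x = 0 := by
        rw [← betaStar_apply (m + 1 + 1) (m + 1) g ⟨insert a ω.1, hcard⟩, hg]
        rfl
      rw [Finset.powersetCard_succ_insert ha] at key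
      have hdisj : Disjoint (Finset.powersetCard (m + 1) ω.1)
          ((Finset.powersetCard m ω.1).image (insert a)) := by
        rw [Finset.disjoint_left]
        rintro x hx hx'
        obtain ⟨y, _, rfl⟩ := Finset.mem_image.mp hx'
        exact ha ((Finset.mem_powersetCard.mp hx).1 (Finset.mem_insert_self a y))
      rw [Finset.sum_union hdisj,
        show Finset.powersetCard (m + 1) ω.1 = {ω.1} from by
          have h5 := Finset.powersetCard_self ω.1
          rwa [ω.2] at h5,
        Finset.sum_singleton,
        Finset.sum_image (fun x hx y hy h => by
          have := congrArg (fun s => Finset.erase s a) h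
          simpa [Finset.erase_insert
              (fun h' => ha ((Finset.mem_powersetCard.mp hx).1 h')),
            Finset.erase_insert
              (fun h' => ha ((Finset.mem_powersetCard.mp hy).1 h'))] using this)] at key
      have hterm : ∀ y ∈ Finset.powersetCard m ω.1,
          Eext (m + 1) g (insert a y) = Eext m f y := by
        intro y hy
        obtain ⟨hsub, hycard⟩ := Finset.mem_powersetCard.mp hy
        have hay : a ∉ y := fun h => ha (hsub h)
        have h1 : (insert a y).card = m + 1 := by
          rw [Finset.card_insert_of_notMem hay, hycard]
        rw [Eext, Eext, dif_pos h1, dif_pos hycard, hf]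
        dsimp only
        rw [dif_neg hay]
      rw [Finset.sum_congr rfl hterm] at key
      have hg1 : Eext (m + 1) g ω.1 = g ω := by
        rw [Eext, dif_pos ω.2]
      rw [hg1] at key
      have := add_eq_zero_iff_eq_neg.mp key
      rw [CharTwo.neg_eq] at this
      exact this.symm
end

section
/- For every integer n ≥ 1, the sequence F_2[Ω]^{n+1} → F_2[Ω]^n → F_2[Ω]^{n-1} given by β_{n+1,n} followed by β_{n,n-1} is exact: the image of β_{n+1,n} equals the kernel of β_{n,n-1}. -/
section ExactnessProof

open Finset Finsupp

variable {Ω' : Type*} [DecidableEq Ω']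

private lemma my_beta_single (Ω : Type*) (m j : ℕ) (ω : NSubsets Ω m) :
    beta Ω m j (Finsupp.single ω 1) =
      ∑ x ∈ (Finset.powersetCard j ω.1).attach,
        Finsupp.single ⟨x.1, (Finset.mem_powersetCard.mp x.2).2⟩ (1 : ZMod 2) := by
  simp [beta, Finsupp.lsum_single]

private lemma my_beta_single_apply (Ω : Type*) [DecidableEq Ω] (m j : ℕ) (ω : NSubsets Ω m)
    (z : NSubsets Ω j) :
    beta Ω m j (Finsupp.single ω 1) z =
      if z.1 ∈ Finset.powersetCard j ω.1 then (1 : ZMod 2) else 0 := by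
  rw [my_beta_single, Finsupp.finset_sum_apply]
  rw [Finset.sum_congr rfl (fun x _ => ?_),
    Finset.sum_attach _ (fun y => if y = z.1 then (1 : ZMod 2) else 0)]
  · rw [Finset.sum_ite_eq' (Finset.powersetCard j ω.1) z.1 (fun _ => (1:ZMod 2))]
  · rw [Finsupp.single_apply]
    simp [Subtype.ext_iff]

/-- The cone operator at `a`. -/
noncomputable def cone (Ω : Type*) [DecidableEq Ω] (a : Ω) (m : ℕ) :
    (NSubsets Ω m →₀ ZMod 2) →ₗ[ZMod 2] (NSubsets Ω (m + 1) →₀ ZMod 2) :=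
  Finsupp.lsum (ZMod 2) fun ω =>
    if h : a ∈ ω.1 then 0
    else Finsupp.lsingle ⟨insert a ω.1, by
      rw [Finset.card_insert_of_notMem h, ω.2]⟩

private lemma cone_single_apply (Ω : Type*) [DecidableEq Ω] (a : Ω) (m : ℕ)
    (ω : NSubsets Ω m) (z : NSubsets Ω (m + 1)) :
    cone Ω a m (Finsupp.single ω 1) z =
      if a ∉ ω.1 ∧ insert a ω.1 = z.1 then (1 : ZMod 2) else 0 := by
  rw [cone, Finsupp.lsum_single]
  split_ifs with h h2 h2
  · exact absurd h h2.1
  · rfl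
  · rw [Finsupp.lsingle_apply, Finsupp.single_apply, if_pos (Subtype.ext h2.2)]
  · rw [Finsupp.lsingle_apply, Finsupp.single_apply, if_neg]
    intro he
    exact h2 ⟨h, congrArg Subtype.val he⟩

private lemma count_two (Ω : Type*) [DecidableEq Ω] (k : ℕ) (ω : NSubsets Ω (k+2))
    (z : NSubsets Ω k) :
    ((Finset.powersetCard (k+1) ω.1).filter
      (fun x => z.1 ∈ Finset.powersetCard k x)).card % 2 = 0 := by
  by_cases hzω : z.1 ⊆ ω.1
  · have : (Finset.powersetCard (k+1) ω.1).filter (fun x => z.1 ∈ Finset.powersetCard k x)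
        = (ω.1 \ z.1).image (fun v => insert v z.1) := by
      ext x
      simp only [Finset.mem_filter, Finset.mem_powersetCard, Finset.mem_image, Finset.mem_sdiff]
      constructor
      · rintro ⟨⟨hxω, hxc⟩, hzx, -⟩
        have hc1 : (x \ z.1).card = 1 := by
          rw [Finset.card_sdiff_of_subset hzx, hxc, z.2]; omega
        obtain ⟨v, hv⟩ := Finset.card_eq_one.mp hc1
        have hvx : v ∈ x \ z.1 := by rw [hv]; exact Finset.mem_singleton_self v
        refine ⟨v, ⟨hxω (Finset.mem_sdiff.mp hvx).1, (Finset.mem_sdiff.mp hvx).2⟩, ?_⟩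
        have := Finset.union_sdiff_of_subset hzx
        rw [hv] at this
        rw [← this, Finset.union_comm, Finset.insert_eq]
      · rintro ⟨v, ⟨hvω, hvz⟩, rfl⟩
        refine ⟨⟨Finset.insert_subset hvω hzω, ?_⟩, Finset.subset_insert _ _, z.2⟩
        rw [Finset.card_insert_of_notMem hvz, z.2]
    rw [this, Finset.card_image_of_injOn, Finset.card_sdiff_of_subset hzω, ω.2, z.2]
    · omega
    · intro v hv w hw he
      have hvz := (Finset.mem_sdiff.mp hv).2
      have he' : insert v z.1 = insert w z.1 := he
      have : v ∈ insert w z.1 := he' ▸ Finset.mem_insert_self v z.1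
      rcases Finset.mem_insert.mp this with h | h
      · exact h
      · exact absurd h hvz
  · rw [Finset.filter_false_of_mem, Finset.card_empty]
    intro x hx hzx
    exact hzω ((Finset.mem_powersetCard.mp hzx).1.trans (Finset.mem_powersetCard.mp hx).1)

private lemma beta_beta (Ω : Type*) [DecidableEq Ω] (k : ℕ) (f : NSubsets Ω (k+2) →₀ ZMod 2) :
    beta Ω (k+1) k (beta Ω (k+2) (k+1) f) = 0 := by
  have : (beta Ω (k+1) k).comp (beta Ω (k+2) (k+1)) = 0 := by
    apply Finsupp.lhom_ext'
    intro ω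
    apply LinearMap.ext
    intro c
    have h1 : (Finsupp.single ω c) = c • (Finsupp.single ω (1 : ZMod 2)) := by
      rw [Finsupp.smul_single, smul_eq_mul, mul_one]
    simp only [LinearMap.comp_apply, Finsupp.lsingle_apply, LinearMap.zero_comp,
      LinearMap.zero_apply, h1, map_smul]
    rw [smul_eq_zero]
    right
    ext z
    rw [my_beta_single, map_sum, Finsupp.finset_sum_apply]
    rw [Finset.sum_congr rfl (fun x _ => my_beta_single_apply Ω (k+1) k _ z),
      Finset.sum_attach _ (fun y => if z.1 ∈ Finset.powersetCard k y then (1:ZMod 2) else 0)]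
    rw [Finset.sum_boole, Finsupp.coe_zero, Pi.zero_apply]
    obtain ⟨t, ht⟩ := (Nat.even_iff.mpr (count_two Ω k ω z))
    rw [ht]
    push_cast
    ring_nf
    rw [show ((2 : ZMod 2)) = 0 by decide]
    ring
  exact LinearMap.ext_iff.mp this f

private lemma key (Ω : Type*) [DecidableEq Ω] (k : ℕ) (a : Ω) (ω z : NSubsets Ω (k+1)) :
    (if a ∈ ω.1 then 0 else
        if z.1 ∈ Finset.powersetCard (k+1) (insert a ω.1) then (1 : ZMod 2) else 0)
      + ∑ y ∈ Finset.powersetCard k ω.1,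
          (if a ∉ y ∧ insert a y = z.1 then (1 : ZMod 2) else 0)
      = if ω = z then 1 else 0 := by
  by_cases h : a ∈ ω.1
  · rw [if_pos h, zero_add]
    rw [Finset.sum_congr rfl (fun y hy => ?_)]
    · rw [Finset.sum_ite_eq' (Finset.powersetCard k ω.1) (ω.1.erase a)
        (fun _ => if ω.1 = z.1 then (1:ZMod 2) else 0)]
      rw [if_pos (Finset.mem_powersetCard.mpr
        ⟨Finset.erase_subset a ω.1, by simp [Finset.card_erase_of_mem h, ω.2]⟩)]
      exact if_congr Subtype.ext_iff.symm rfl rfl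
    · obtain ⟨hyω, hyc⟩ := Finset.mem_powersetCard.mp hy
      by_cases hye : y = ω.1.erase a
      · subst hye
        rw [if_pos rfl]
        refine if_congr ?_ rfl rfl
        rw [Finset.insert_erase h]
        simp [Finset.notMem_erase]
      · rw [if_neg hye, if_neg]
        rintro ⟨hay, -⟩
        apply hye
        apply Finset.eq_of_subset_of_card_le (Finset.subset_erase.mpr ⟨hyω, hay⟩)
        rw [Finset.card_erase_of_mem h, ω.2, hyc]
        omega
  · rw [if_neg h]
    by_cases haz : a ∈ z.1
    · have hωz : ω ≠ z := fun he => h (he ▸ haz)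
      rw [if_neg hωz]
      have e1 : (if z.1 ∈ Finset.powersetCard (k+1) (insert a ω.1) then (1 : ZMod 2) else 0)
          = if z.1.erase a ⊆ ω.1 then 1 else 0 := by
        congr 1
        rw [Finset.mem_powersetCard]
        simp only [z.2, and_true, eq_iff_iff]
        exact Finset.subset_insert_iff
      have e2 : ∑ y ∈ Finset.powersetCard k ω.1,
            (if a ∉ y ∧ insert a y = z.1 then (1 : ZMod 2) else 0)
          = if z.1.erase a ⊆ ω.1 then 1 else 0 := by
        rw [Finset.sum_congr rfl (fun y hy => ?_)]
        · rw [Finset.sum_ite_eq' (Finset.powersetCard k ω.1) (z.1.erase a)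
            (fun _ => (1:ZMod 2))]
          congr 1
          rw [Finset.mem_powersetCard]
          simp [Finset.card_erase_of_mem haz, z.2]
        · obtain ⟨hyω, hyc⟩ := Finset.mem_powersetCard.mp hy
          congr 1
          rw [eq_iff_iff]
          constructor
          · rintro ⟨hay, he⟩
            rw [← he, Finset.erase_insert hay]
          · rintro rfl
            exact ⟨fun hc => h (hyω hc), Finset.insert_erase haz⟩
      rw [e1, e2]
      split <;> decide
    · have e2 : ∑ y ∈ Finset.powersetCard k ω.1,
            (if a ∉ y ∧ insert a y = z.1 then (1 : ZMod 2) else 0) = 0 := by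
        apply Finset.sum_eq_zero
        intro y hy
        rw [if_neg]
        rintro ⟨-, he⟩
        exact haz (he ▸ Finset.mem_insert_self a y)
      rw [e2, add_zero]
      congr 1
      rw [Finset.mem_powersetCard, eq_iff_iff, Subtype.ext_iff]
      simp only [z.2, and_true]
      rw [Finset.subset_insert_iff_of_notMem haz]
      constructor
      · intro hzω
        exact (Finset.eq_of_subset_of_card_le hzω (by rw [ω.2, z.2])).symm
      · intro he; rw [he]

private lemma homotopy (Ω : Type*) [DecidableEq Ω] (k : ℕ) (a : Ω)
    (f : NSubsets Ω (k+1) →₀ ZMod 2) :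
    beta Ω (k+2) (k+1) (cone Ω a (k+1) f) + cone Ω a k (beta Ω (k+1) k f) = f := by
  have : (beta Ω (k+2) (k+1)).comp (cone Ω a (k+1))
      + (cone Ω a k).comp (beta Ω (k+1) k) = LinearMap.id := by
    apply Finsupp.lhom_ext'
    intro ω
    apply LinearMap.ext
    intro c
    have h1 : (Finsupp.single ω c) = c • (Finsupp.single ω (1 : ZMod 2)) := by
      rw [Finsupp.smul_single, smul_eq_mul, mul_one]
    simp only [LinearMap.add_apply, LinearMap.comp_apply, Finsupp.lsingle_apply,
      LinearMap.id_comp, LinearMap.id_apply, h1, map_smul]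
    congr 1
    ext z
    rw [Finsupp.add_apply]
    have hT1 : beta Ω (k+2) (k+1) (cone Ω a (k+1) (Finsupp.single ω 1)) z
        = if a ∈ ω.1 then 0 else
            if z.1 ∈ Finset.powersetCard (k+1) (insert a ω.1) then (1 : ZMod 2) else 0 := by
      rw [cone, Finsupp.lsum_single]
      by_cases h : a ∈ ω.1
      · rw [dif_pos h, if_pos h]
        simp
      · rw [dif_neg h, if_neg h, Finsupp.lsingle_apply]
        exact my_beta_single_apply Ω (k+2) (k+1) _ z
    have hT2 : cone Ω a k (beta Ω (k+1) k (Finsupp.single ω 1)) z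
        = ∑ y ∈ Finset.powersetCard k ω.1,
            (if a ∉ y ∧ insert a y = z.1 then (1 : ZMod 2) else 0) := by
      rw [my_beta_single, map_sum, Finsupp.finset_sum_apply]
      rw [Finset.sum_congr rfl (fun x _ => cone_single_apply Ω a k _ z),
        Finset.sum_attach _ (fun y => if a ∉ y ∧ insert a y = z.1 then (1 : ZMod 2) else 0)]
    rw [hT1, hT2, Finsupp.single_apply]
    exact key Ω k a ω z
  calc beta Ω (k+2) (k+1) (cone Ω a (k+1) f) + cone Ω a k (beta Ω (k+1) k f)
      = ((beta Ω (k+2) (k+1)).comp (cone Ω a (k+1))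
        + (cone Ω a k).comp (beta Ω (k+1) k)) f := rfl
    _ = f := by rw [this]; rfl

end ExactnessProof

/-- For every integer `n ≥ 1`, the sequence `F₂[Ω]^{n+1} → F₂[Ω]^n → F₂[Ω]^{n-1}` given by
`β_{n+1,n}` followed by `β_{n,n-1}` is exact. -/
theorem image_beta_eq_ker_beta
    (Ω : Type) [Countable Ω] [Infinite Ω] (n : ℕ) (hn : 1 ≤ n) :
    LinearMap.range (beta Ω (n + 1) n) = LinearMap.ker (beta Ω n (n - 1)) := by
  classical
  obtain ⟨k, rfl⟩ : ∃ k, n = k + 1 := ⟨n - 1, (Nat.succ_pred_eq_of_pos hn).symm⟩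
  apply le_antisymm
  · rintro x ⟨y, rfl⟩
    exact LinearMap.mem_ker.mpr (beta_beta Ω k y)
  · intro x hx
    have a : Ω := Classical.arbitrary Ω
    refine ⟨cone Ω a (k+1) x, ?_⟩
    have h := homotopy Ω k a x
    have hx' : beta Ω (k+1) k x = 0 := hx
    rw [hx', map_zero, add_zero] at h
    exact h
end

section
/- For every integer n ≥ 1, if U is an F_2-subspace of F_2^{[Ω]^n} that is invariant under the natural action of Sym(Ω), closed in the product topology, and of finite index as an additive subgroup, then U = F_2^{[Ω]^n}. In other words, F_2^{[Ω]^n} has no proper closed Sym(Ω)-submodule of finite index. -/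
instance : TopologicalSpace (ZMod 2) := ⊥
instance : DiscreteTopology (ZMod 2) := ⟨rfl⟩

theorem Finset.exists_perm_forall_apply_notMem {α : Type*} [DecidableEq α] [Infinite α]
    (T : Finset α) : ∃ σ : Equiv.Perm α, ∀ t ∈ T, σ t ∉ T := by
  obtain ⟨S, hST, hcard⟩ := T.finite_toSet.infinite_compl.exists_subset_card_eq T.card
  let e : T ≃ S := Fintype.equivOfCardEq (by simp [hcard])
  exact ⟨e.extendSubtype, fun t ht => hST (e.extendSubtype_mem t ht)⟩

theorem isOpen_pi_exists_finset_forall_eqOn {ι M : Type*} [TopologicalSpace M]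
    {s : Set (ι → M)} (hs : IsOpen s) {x : ι → M} (hx : x ∈ s) :
    ∃ I : Finset ι, ∀ f : ι → M, (∀ i ∈ I, f i = x i) → f ∈ s := by
  obtain ⟨I, u, hu, hIu⟩ := isOpen_pi_iff.mp hs x hx
  exact ⟨I, fun f hf => hIu fun i hi => hf i hi ▸ (hu i hi).2⟩

section permImage

variable {Ω : Type*} [DecidableEq Ω] {n : ℕ}

theorem permImage_permImage_inv (σ : Equiv.Perm Ω) (w : NSubsets Ω n) :
    permImage σ (permImage σ⁻¹ w) = w := by
  ext x
  simp [permImage, Finset.image_image]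

theorem exists_perm_forall_permImage_notMem [Infinite Ω] (hn : 1 ≤ n)
    (I : Finset (NSubsets Ω n)) : ∃ σ : Equiv.Perm Ω, ∀ w ∈ I, permImage σ w ∉ I := by
  obtain ⟨σ, hσ⟩ := (I.biUnion Subtype.val).exists_perm_forall_apply_notMem
  refine ⟨σ, fun w hw hσw => ?_⟩
  obtain ⟨t, ht⟩ : w.1.Nonempty := Finset.card_pos.mp (by omega)
  exact hσ t (Finset.mem_biUnion.mpr ⟨w, hw, ht⟩)
    (Finset.mem_biUnion.mpr ⟨_, hσw, Finset.mem_image_of_mem σ ht⟩)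

theorem Submodule.eq_top_of_forall_vanishing_mem [Infinite Ω] (hn : 1 ≤ n)
    (U : Submodule (ZMod 2) (NSubsets Ω n → ZMod 2))
    (hInv : ∀ σ : Equiv.Perm Ω, ∀ f ∈ U, (fun w => f (permImage σ⁻¹ w)) ∈ U)
    {I : Finset (NSubsets Ω n)} (hI : ∀ f : NSubsets Ω n → ZMod 2, (∀ w ∈ I, f w = 0) → f ∈ U) :
    U = ⊤ := by
  refine eq_top_iff.mpr fun h _ => ?_
  obtain ⟨σ, hσ⟩ := exists_perm_forall_permImage_notMem hn I
  have hout : (↑I : Set _)ᶜ.indicator h ∈ U := hI _ fun w hw => by simp [hw]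
  have hin : (↑I : Set _).indicator h ∈ U := by
    have hmoved := hInv σ _ (hI (fun w => (↑I : Set _).indicator h (permImage σ w))
      fun w hw => by simp [hσ w hw])
    simpa only [permImage_permImage_inv] using hmoved
  simpa only [Set.indicator_self_add_compl] using U.add_mem hin hout

end permImage

theorem no_proper_closed_finite_index_submodule_general
    (Ω : Type) [Infinite Ω] [DecidableEq Ω] (n : ℕ) (hn : 1 ≤ n)
    (U : Submodule (ZMod 2) (NSubsets Ω n → ZMod 2))
    (hInv : ∀ σ : Equiv.Perm Ω, ∀ f ∈ U, (fun w => f (permImage σ⁻¹ w)) ∈ U)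
    (hClosed : IsClosed (U : Set (NSubsets Ω n → ZMod 2)))
    (hFin : U.toAddSubgroup.FiniteIndex) :
    U = ⊤ := by
  have hOpen : IsOpen (U : Set (NSubsets Ω n → ZMod 2)) :=
    AddSubgroup.isOpen_of_isClosed_of_finiteIndex U.toAddSubgroup hClosed
  obtain ⟨I, hI⟩ := isOpen_pi_exists_finset_forall_eqOn hOpen U.zero_mem
  exact U.eq_top_of_forall_vanishing_mem hn hInv hI

/-- `F₂^{[Ω]^n}` has no proper closed `Sym(Ω)`-submodule of finite index: any
`Sym(Ω)`-invariant, topologically closed `F₂`-subspace of finite index (as an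
additive subgroup) is the whole space. -/
theorem no_proper_closed_finite_index_submodule
    (Ω : Type) [Countable Ω] [Infinite Ω] [DecidableEq Ω] (n : ℕ) (hn : 1 ≤ n)
    (U : Submodule (ZMod 2) (NSubsets Ω n → ZMod 2))
    (hInv : ∀ σ : Equiv.Perm Ω, ∀ f ∈ U, (fun w => f (permImage σ⁻¹ w)) ∈ U)
    (hClosed : IsClosed (U : Set (NSubsets Ω n → ZMod 2)))
    (hFin : U.toAddSubgroup.FiniteIndex) :
    U = ⊤ :=
  no_proper_closed_finite_index_submodule_general Ω n hn U hInv hClosed hFin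
end

section
/- For every integer n ≥ 1 and every finite subset A of Ω, the subspace V_A equals the set of all f ∈ F_2^{[Ω]^{n-1}} such that f(w) = 0 for every (n-1)-element subset w of A. -/
/-- For every `n ≥ 1` and every finite subset `A` of `Ω`, the subspace `V_A` equals the
set of all `f ∈ F₂^{[Ω]^{n-1}}` vanishing on every `(n-1)`-element subset of `A`. -/
theorem VA_eq_vanishing_on_A
    (Ω : Type) [Countable Ω] [Infinite Ω] [DecidableEq Ω] (n : ℕ) (hn : 1 ≤ n)
    (A : Finset Ω) :
    (VA Ω n A : Set (NSubsets Ω (n - 1) → ZMod 2)) =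
      {f | ∀ w : NSubsets Ω (n - 1), w.1 ⊆ A → f w = 0} := by
  ext f
  simp only [SetLike.mem_coe, Set.mem_setOf_eq]
  constructor
  · intro hf
    have hle : VA Ω n A ≤
        { carrier := {g : NSubsets Ω (n - 1) → ZMod 2 |
            ∀ w : NSubsets Ω (n - 1), w.1 ⊆ A → g w = 0}
          add_mem' := fun hf hg w hw => by
            simp only [Set.mem_setOf_eq] at *
            simp [Pi.add_apply, hf w hw, hg w hw]
          zero_mem' := fun w _ => rfl
          smul_mem' := fun c g hg w hw => by
            simp only [Set.mem_setOf_eq] at *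
            simp [Pi.smul_apply, hg w hw] } := by
      rw [VA]
      apply iSup₂_le
      intro B hB g hg w hw
      obtain ⟨hBA, hBcard⟩ := hB
      apply hg
      rw [Finset.inter_eq_left.mpr hw]
      intro hcontra
      have hc : w.1.card = n - 1 := w.2
      rw [hcontra] at hc
      omega
    exact hle hf
  · intro hf
    set S := A.powerset.filter (fun B => B.card < n - 1) with hS
    set g : Finset Ω → (NSubsets Ω (n - 1) → ZMod 2) :=
      fun B w => if w.1 ∩ A = B then f w else 0 with hg
    have hfeq : f = ∑ B ∈ S, g B := by
      funext w
      rw [Finset.sum_apply]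
      have : ∑ B ∈ S, g B w = if w.1 ∩ A ∈ S then f w else 0 := by
        simp only [hg]
        rw [Finset.sum_ite_eq S (w.1 ∩ A) (fun _ => f w)]
      rw [this]
      split_ifs with h
      · rfl
      · rw [hS, Finset.mem_filter, Finset.mem_powerset] at h
        push_neg at h
        have h1 := h Finset.inter_subset_right
        have h2 : (w.1 ∩ A).card ≤ w.1.card := Finset.card_le_card Finset.inter_subset_left
        have h3 : w.1.card = n - 1 := w.2
        have h4 : (w.1 ∩ A).card = n - 1 := by omega
        have h5 : w.1 ∩ A = w.1 :=
          Finset.eq_of_subset_of_card_le Finset.inter_subset_left (by omega)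
        exact hf w (by rw [← h5]; exact Finset.inter_subset_right)
    rw [hfeq]
    apply Submodule.sum_mem
    intro B hB
    rw [hS, Finset.mem_filter, Finset.mem_powerset] at hB
    have hmem : g B ∈ VBA Ω n A B := by
      intro w hw
      simp only [hg, if_neg hw]
    exact Submodule.mem_iSup_of_mem B (Submodule.mem_iSup_of_mem hB hmem)
end

section
/- For every integer n ≥ 1 and every finite subset A of Ω, if V is an F_2-subspace of F_2^{[Ω]^{n-1}} that is invariant under Sym(Ω∖A), closed in the product topology, and of finite index as an additive subgroup, then V_A ⊆ V. -/
/-- The involutive permutation swapping two disjoint finsets via an equivalence. -/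
noncomputable def swapPerm {Ω : Type*} [DecidableEq Ω] (D E : Finset Ω) (hDE : Disjoint D E)
    (e : {x // x ∈ D} ≃ {x // x ∈ E}) : Equiv.Perm Ω :=
  Function.Involutive.toPerm
    (fun x => if h : x ∈ D then (e ⟨x, h⟩ : Ω) else if h : x ∈ E then (e.symm ⟨x, h⟩ : Ω) else x)
    (by
      intro x
      by_cases hD : x ∈ D
      · have hE : (e ⟨x, hD⟩ : Ω) ∈ E := (e ⟨x, hD⟩).2
        have hnD : (e ⟨x, hD⟩ : Ω) ∉ D := Finset.disjoint_right.mp hDE hE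
        simp only [hD, dif_pos, hnD, dif_neg, hE]
        simp
      · by_cases hE : x ∈ E
        · have hD' : (e.symm ⟨x, hE⟩ : Ω) ∈ D := (e.symm ⟨x, hE⟩).2
          simp only [hD, dif_neg, hE, dif_pos, hD']
          simp
        · simp [hD, hE])

lemma swapPerm_inv {Ω : Type*} [DecidableEq Ω] (D E : Finset Ω) (hDE : Disjoint D E)
    (e : {x // x ∈ D} ≃ {x // x ∈ E}) : (swapPerm D E hDE e)⁻¹ = swapPerm D E hDE e :=
  Equiv.ext fun _ => rfl

lemma swapPerm_apply_of_mem {Ω : Type*} [DecidableEq Ω] (D E : Finset Ω) (hDE : Disjoint D E)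
    (e : {x // x ∈ D} ≃ {x // x ∈ E}) {x : Ω} (hx : x ∈ D) :
    swapPerm D E hDE e x = (e ⟨x, hx⟩ : Ω) := by
  simp [swapPerm, Function.Involutive.toPerm, hx]

lemma swapPerm_apply_of_not_mem {Ω : Type*} [DecidableEq Ω] (D E : Finset Ω) (hDE : Disjoint D E)
    (e : {x // x ∈ D} ≃ {x // x ∈ E}) {x : Ω} (hxD : x ∉ D) (hxE : x ∉ E) :
    swapPerm D E hDE e x = x := by
  simp [swapPerm, Function.Involutive.toPerm, hxD, hxE]

lemma permImage_inv_cancel {Ω : Type*} [DecidableEq Ω] (σ : Equiv.Perm Ω) {n : ℕ}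
    (w : NSubsets Ω n) : permImage σ (permImage σ⁻¹ w) = w := by
  apply Subtype.ext
  simp only [permImage, Finset.image_image]
  have : (⇑σ ∘ ⇑σ⁻¹) = id := by
    funext x; simp
  rw [this, Finset.image_id]

lemma permImage_eq_self {Ω : Type*} [DecidableEq Ω] (σ : Equiv.Perm Ω) {n : ℕ}
    (w : NSubsets Ω n) (h : ∀ x ∈ w.1, σ x = x) : permImage σ w = w := by
  apply Subtype.ext
  simp only [permImage]
  rw [Finset.image_congr (fun x hx => h x hx)]
  exact Finset.image_id'

/-- For every `n ≥ 1` and finite `A ⊆ Ω`, any `Sym(Ω∖A)`-invariant, topologically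
closed `F₂`-subspace of `F₂^{[Ω]^{n-1}}` of finite index contains `V_A`. -/
theorem VA_le_closed_finite_index
    (Ω : Type) [Countable Ω] [Infinite Ω] [DecidableEq Ω] (n : ℕ) (hn : 1 ≤ n)
    (A : Finset Ω)
    (V : Submodule (ZMod 2) (NSubsets Ω (n - 1) → ZMod 2))
    (hInv : ∀ σ : Equiv.Perm Ω, (∀ a ∈ A, σ a = a) →
      ∀ f ∈ V, (fun w => f (permImage σ⁻¹ w)) ∈ V)
    (hClosed : IsClosed (V : Set (NSubsets Ω (n - 1) → ZMod 2)))
    (hFin : V.toAddSubgroup.FiniteIndex) :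
    VA Ω n A ≤ V := by
  classical
  haveI : V.toAddSubgroup.FiniteIndex := hFin
  have hopen : IsOpen (V : Set (NSubsets Ω (n - 1) → ZMod 2)) :=
    AddSubgroup.isOpen_of_isClosed_of_finiteIndex V.toAddSubgroup hClosed
  obtain ⟨I, u, hu, hsub⟩ := isOpen_pi_iff.mp hopen 0 V.zero_mem
  -- V contains every function vanishing on I
  have hUI : ∀ g : NSubsets Ω (n - 1) → ZMod 2, (∀ w ∈ I, g w = 0) → g ∈ V := by
    intro g hg
    apply hsub
    intro w hw
    have := (hu w hw).2
    simp only [Pi.zero_apply] at this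
    simpa [hg w hw] using this
  -- P : all points appearing in I, together with A
  set P : Finset Ω := A ∪ I.sup (fun w => w.1) with hP
  have hAP : A ⊆ P := Finset.subset_union_left
  have hIP : ∀ w ∈ I, w.1 ⊆ P := by
    intro w hw
    intro x hx
    exact Finset.mem_union_right _ (Finset.mem_sup.mpr ⟨w, hw, hx⟩)
  set D : Finset Ω := P \ A with hD
  have hinf : ((↑P : Set Ω)ᶜ).Infinite := P.finite_toSet.infinite_compl
  obtain ⟨E, hEsub, hEcard⟩ := hinf.exists_subset_card_eq D.card
  have hEP : ∀ x ∈ E, x ∉ P := by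
    intro x hx
    exact hEsub hx
  have hDE : Disjoint D E := by
    rw [Finset.disjoint_left]
    intro x hxD hxE
    exact hEP x hxE (Finset.mem_sdiff.mp hxD).1
  set e : {x // x ∈ D} ≃ {x // x ∈ E} := Finset.equivOfCardEq hEcard.symm with he
  set σ : Equiv.Perm Ω := swapPerm D E hDE e with hσ
  have hfixA : ∀ a ∈ A, σ a = a := by
    intro a ha
    apply swapPerm_apply_of_not_mem
    · intro h; exact (Finset.mem_sdiff.mp h).2 ha
    · intro h; exact hEP a h (hAP ha)
  have hmoves : ∀ p ∈ D, σ p ∉ P := by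
    intro p hp
    rw [swapPerm_apply_of_mem D E hDE e hp]
    exact hEP _ (e ⟨p, hp⟩).2
  -- main argument
  refine iSup₂_le fun B hB => ?_
  obtain ⟨hBA, hBcard⟩ := hB
  intro f hf
  have hf' : ∀ w : NSubsets Ω (n - 1), w.1 ∩ A ≠ B → f w = 0 := hf
  -- f vanishes on subsets of A
  have hfI : ∀ w : NSubsets Ω (n - 1), w.1 ⊆ A → f w = 0 := by
    intro w hw
    apply hf'
    rw [Finset.inter_eq_left.mpr hw]
    intro hcontra
    rw [← hcontra] at hBcard
    rw [w.2] at hBcard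
    exact lt_irrefl _ hBcard
  set f₁ : NSubsets Ω (n - 1) → ZMod 2 := fun w => if w ∈ I then 0 else f w with hf₁
  set f₂ : NSubsets Ω (n - 1) → ZMod 2 := fun w => if w ∈ I then f w else 0 with hf₂
  have hsplit : f = f₁ + f₂ := by
    funext w
    by_cases hw : w ∈ I <;> simp [hf₁, hf₂, hw]
  have h1 : f₁ ∈ V := hUI f₁ (fun w hw => if_pos hw)
  -- f₂ = σ · g for g = f₂ ∘ permImage σ, and g vanishes on I
  set g : NSubsets Ω (n - 1) → ZMod 2 := fun w => f₂ (permImage σ w) with hg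
  have hgI : ∀ w ∈ I, g w = 0 := by
    intro w hw
    simp only [hg, hf₂]
    by_cases hσw : permImage σ w ∈ I
    · rw [if_pos hσw]
      by_cases hwA : w.1 ⊆ A
      · rw [permImage_eq_self σ w (fun x hx => hfixA x (hwA hx))]
        exact hfI w hwA
      · exfalso
        obtain ⟨p, hpw, hpA⟩ := Finset.not_subset.mp hwA
        have hpD : p ∈ D := Finset.mem_sdiff.mpr ⟨hIP w hw hpw, hpA⟩
        have : σ p ∈ (permImage σ w).1 := Finset.mem_image_of_mem σ hpw
        exact hmoves p hpD (hIP _ hσw this)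
    · rw [if_neg hσw]
  have hgV : g ∈ V := hUI g hgI
  have h2' := hInv σ hfixA g hgV
  have h2 : f₂ ∈ V := by
    have : (fun w => g (permImage σ⁻¹ w)) = f₂ := by
      funext w
      simp only [hg, permImage_inv_cancel]
    rwa [this] at h2'
  rw [hsplit]
  exact V.add_mem h1 h2
end

section
/- Let n and k be integers with 1 ≤ k ≤ n, let A_1, …, A_k be finite subsets of Ω, and set A = A_1 ∪ … ∪ A_{k-1}. Then for every f ∈ ⋂_{i=1}^{k-1} W_{A∖A_i} there exists f̄ ∈ ⋂_{i=1}^{k-1} W_{(A∪A_k)∖A_i} such that f(w) = f̄(w) for every n-element subset w of A; that is, the two intersections induce the same set of functions on [A]^n. -/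
set_option linter.unusedSectionVars false


section Aux
variable {Ω : Type} [DecidableEq Ω]

lemma zmod2_add_self (x : ZMod 2) : x + x = 0 := by
  fin_cases x <;> rfl

def liftF (a : ℕ) (u : NSubsets Ω a → ZMod 2) : Finset Ω → ZMod 2 :=
  fun x => if h : x.card = a then u ⟨x, h⟩ else 0

lemma liftF_eq {a : ℕ} (u : NSubsets Ω a → ZMod 2) {x : Finset Ω} (h : x.card = a) :
    liftF a u x = u ⟨x, h⟩ := dif_pos h

lemma sum_powersetCard_erase {a : ℕ} {w : Finset Ω} (hw : w.card = a + 1)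
    (F : Finset Ω → ZMod 2) :
    ∑ x ∈ Finset.powersetCard a w, F x = ∑ c ∈ w, F (w.erase c) := by
  refine (Finset.sum_bij (fun c (hc : c ∈ w) => w.erase c) ?_ ?_ ?_ ?_).symm
  · intro c hc
    rw [Finset.mem_powersetCard]
    exact ⟨Finset.erase_subset _ _, by rw [Finset.card_erase_of_mem hc, hw]; omega⟩
  · intro c hc c' hc' h
    by_contra hne
    have h2 : w.erase c = w.erase c' := h
    have : c ∈ w.erase c := h2 ▸ Finset.mem_erase.2 ⟨hne, hc⟩
    exact (Finset.mem_erase.1 this).1 rfl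
  · intro x hx
    rw [Finset.mem_powersetCard] at hx
    have hcard : (w \ x).card = 1 := by
      rw [Finset.card_sdiff_of_subset hx.1, hw, hx.2]; omega
    obtain ⟨c, hc⟩ := Finset.card_eq_one.1 hcard
    have hcw : c ∈ w := (Finset.mem_sdiff.1 (hc ▸ Finset.mem_singleton_self c)).1
    refine ⟨c, hcw, ?_⟩
    have hxsub : x ⊆ w.erase c := by
      intro y hy
      refine Finset.mem_erase.2 ⟨?_, hx.1 hy⟩
      rintro rfl
      exact (Finset.mem_sdiff.1 (hc ▸ Finset.mem_singleton_self y)).2 hy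
    refine (Finset.eq_of_subset_of_card_le hxsub ?_).symm
    rw [Finset.card_erase_of_mem hcw, hw, hx.2]; omega
  · intro c hc; rfl

lemma betaStar_apply_s13 {a : ℕ} (u : NSubsets Ω a → ZMod 2) (v : NSubsets Ω (a + 1)) :
    betaStar Ω (a + 1) a u v = ∑ c ∈ v.1, liftF a u (v.1.erase c) := by
  have h1 : betaStar Ω (a + 1) a u v = ∑ x ∈ Finset.powersetCard a v.1, liftF a u x := by
    show ∑ x ∈ (Finset.powersetCard a v.1).attach, u ⟨x.1, _⟩ = _
    rw [← Finset.sum_attach (Finset.powersetCard a v.1) (fun x => liftF a u x)]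
    exact Finset.sum_congr rfl fun x _ =>
      (liftF_eq u (Finset.mem_powersetCard.mp x.2).2).symm
  rw [h1, sum_powersetCard_erase v.2]

lemma betaStar_betaStar {a : ℕ} (u : NSubsets Ω a → ZMod 2) (w : NSubsets Ω (a + 2)) :
    betaStar Ω (a + 2) (a + 1) (betaStar Ω (a + 1) a u) w = 0 := by
  rw [betaStar_apply_s13]
  have hterm : ∀ c ∈ w.1, liftF (a+1) (betaStar Ω (a + 1) a u) (w.1.erase c)
      = ∑ c' ∈ w.1.erase c, liftF a u ((w.1.erase c).erase c') := by
    intro c hc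
    have hcard : (w.1.erase c).card = a + 1 := by
      rw [Finset.card_erase_of_mem hc, w.2]; omega
    rw [liftF_eq _ hcard, betaStar_apply_s13]
  rw [Finset.sum_congr rfl hterm, ← Finset.sum_sigma w.1 (fun c => w.1.erase c)
    (fun p => liftF a u ((w.1.erase p.1).erase p.2))]
  refine Finset.sum_involution (fun p _ => ⟨p.2, p.1⟩) ?_ ?_ ?_ ?_
  · intro p hp
    have : (w.1.erase p.1).erase p.2 = (w.1.erase p.2).erase p.1 := Finset.erase_right_comm
    rw [this]; exact zmod2_add_self _
  · intro p hp hne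
    rw [Finset.mem_sigma] at hp
    intro h
    have h1 : p.2 = p.1 := congrArg Sigma.fst h
    exact (Finset.mem_erase.1 hp.2).1 h1
  · intro p hp
    rw [Finset.mem_sigma] at hp ⊢
    have h2 := Finset.mem_erase.1 hp.2
    have hp1 : p.1 ∈ w.1 := hp.1
    exact ⟨h2.2, Finset.mem_erase.2 ⟨fun h => h2.1 h.symm, hp1⟩⟩
  · intro p hp; rfl


/-- Cone construction inside a finite set `F`. -/
lemma cone_s13 (m : ℕ) (F : Finset Ω) (g : NSubsets Ω (m + 1) → ZMod 2)
    (hg : ∀ w : NSubsets Ω (m + 2), w.1 ⊆ F → betaStar Ω (m + 2) (m + 1) g w = 0) :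
    ∃ s : NSubsets Ω m → ZMod 2,
      (∀ v : NSubsets Ω (m + 1), v.1 ⊆ F → betaStar Ω (m + 1) m s v = g v) ∧
      ((∀ v : NSubsets Ω (m + 1), v.1 ⊆ F → g v = 0) →
        ∀ y : NSubsets Ω m, y.1 ⊆ F → s y = 0) := by
  rcases F.eq_empty_or_nonempty with hF | ⟨o, ho⟩
  · refine ⟨0, ?_, fun _ _ _ => rfl⟩
    intro v hv
    exfalso
    have hve : v.1 = ∅ := Finset.subset_empty.1 (hF ▸ hv)
    have hv2 := v.2
    rw [hve, Finset.card_empty] at hv2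
    omega
  · refine ⟨fun y => if h : o ∉ y.1 ∧ insert o y.1 ⊆ F then
      g ⟨insert o y.1, by rw [Finset.card_insert_of_notMem h.1, y.2]⟩ else 0, ?_, ?_⟩
    · intro v hv
      rw [betaStar_apply_s13]
      by_cases hov : o ∈ v.1
      · rw [← Finset.add_sum_erase _ _ hov]
        have h2 : ∀ c ∈ v.1.erase o, liftF m (fun y => if h : o ∉ y.1 ∧ insert o y.1 ⊆ F then
            g ⟨insert o y.1, by rw [Finset.card_insert_of_notMem h.1, y.2]⟩ else 0)
            (v.1.erase c) = 0 := by
          intro c hc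
          have hco : c ≠ o := (Finset.mem_erase.1 hc).1
          have hcv : c ∈ v.1 := (Finset.mem_erase.1 hc).2
          have hcard : (v.1.erase c).card = m := by
            rw [Finset.card_erase_of_mem hcv, v.2]; omega
          rw [liftF_eq _ hcard, dif_neg]
          rintro ⟨h1, -⟩
          exact h1 (Finset.mem_erase.2 ⟨fun h => hco h.symm, hov⟩)
        rw [Finset.sum_congr rfl h2, Finset.sum_const_zero, add_zero]
        have hcard : (v.1.erase o).card = m := by
          rw [Finset.card_erase_of_mem hov, v.2]; omega
        rw [liftF_eq _ hcard, dif_pos ⟨Finset.notMem_erase o v.1,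
          by rw [Finset.insert_erase hov]; exact hv⟩]
        exact congrArg g (Subtype.ext (Finset.insert_erase hov))
      · -- o ∉ v
        have hW : (insert o v.1).card = m + 2 := by
          rw [Finset.card_insert_of_notMem hov, v.2]
        have hWF : insert o v.1 ⊆ F := Finset.insert_subset ho hv
        have h0 := hg ⟨insert o v.1, hW⟩ hWF
        rw [betaStar_apply_s13] at h0
        rw [← Finset.add_sum_erase _ _ (Finset.mem_insert_self o v.1)] at h0
        rw [Finset.erase_insert hov] at h0
        have hterm : ∀ c ∈ v.1, liftF (m+1) g ((insert o v.1).erase c)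
            = liftF m (fun y => if h : o ∉ y.1 ∧ insert o y.1 ⊆ F then
              g ⟨insert o y.1, by rw [Finset.card_insert_of_notMem h.1, y.2]⟩ else 0)
              (v.1.erase c) := by
          intro c hc
          have hco : c ≠ o := fun h => hov (h ▸ hc)
          have he : (insert o v.1).erase c = insert o (v.1.erase c) := by
            ext z
            simp only [Finset.mem_erase, Finset.mem_insert]
            constructor
            · rintro ⟨hz, rfl | hz2⟩
              · exact Or.inl rfl
              · exact Or.inr ⟨hz, hz2⟩
            · rintro (rfl | ⟨hz, hz2⟩)
              · exact ⟨hco.symm, Or.inl rfl⟩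
              · exact ⟨hz, Or.inr hz2⟩
          have hcard1 : ((insert o v.1).erase c).card = m + 1 := by
            rw [Finset.card_erase_of_mem (Finset.mem_insert_of_mem hc), hW]; omega
          have hcard2 : (v.1.erase c).card = m := by
            rw [Finset.card_erase_of_mem hc, v.2]; omega
          have hno : o ∉ v.1.erase c := fun h => hov (Finset.mem_of_mem_erase h)
          have hins : insert o (v.1.erase c) ⊆ F := by
            refine Finset.insert_subset ho (fun z hz => hv (Finset.mem_of_mem_erase hz))
          rw [liftF_eq _ hcard1, liftF_eq _ hcard2, dif_pos ⟨hno, hins⟩]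
          exact congrArg g (Subtype.ext he)
        rw [Finset.sum_congr rfl hterm] at h0
        have hgv : liftF (m+1) g v.1 = g v := by
          rw [liftF_eq _ v.2]
        rw [hgv] at h0
        have h2 := congrArg (fun z => g v + z) h0
        simp only [← add_assoc, zmod2_add_self, zero_add, add_zero] at h2
        exact h2
    · intro hg0 y hy
      by_cases h : o ∉ y.1 ∧ insert o y.1 ⊆ F
      · simp only [dif_pos h]
        exact hg0 _ h.2
      · simp only [dif_neg h]

/-- Global exactness via a cone at a point. -/
lemma exact_global (m : ℕ) (o : Ω) (g : NSubsets Ω (m + 1) → ZMod 2)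
    (hg : ∀ w : NSubsets Ω (m + 2), betaStar Ω (m + 2) (m + 1) g w = 0) :
    ∃ s : NSubsets Ω m → ZMod 2,
      ∀ v : NSubsets Ω (m + 1), betaStar Ω (m + 1) m s v = g v := by
  refine ⟨fun y => if h : o ∉ y.1 then
    g ⟨insert o y.1, by rw [Finset.card_insert_of_notMem h, y.2]⟩ else 0, ?_⟩
  intro v
  rw [betaStar_apply_s13]
  by_cases hov : o ∈ v.1
  · rw [← Finset.add_sum_erase _ _ hov]
    have h2 : ∀ c ∈ v.1.erase o, liftF m (fun y => if h : o ∉ y.1 then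
        g ⟨insert o y.1, by rw [Finset.card_insert_of_notMem h, y.2]⟩ else 0)
        (v.1.erase c) = 0 := by
      intro c hc
      have hco : c ≠ o := (Finset.mem_erase.1 hc).1
      have hcv : c ∈ v.1 := (Finset.mem_erase.1 hc).2
      have hcard : (v.1.erase c).card = m := by
        rw [Finset.card_erase_of_mem hcv, v.2]; omega
      rw [liftF_eq _ hcard, dif_neg]
      intro h1
      exact h1 (Finset.mem_erase.2 ⟨fun h => hco h.symm, hov⟩)
    rw [Finset.sum_congr rfl h2, Finset.sum_const_zero, add_zero]
    have hcard : (v.1.erase o).card = m := by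
      rw [Finset.card_erase_of_mem hov, v.2]; omega
    rw [liftF_eq _ hcard, dif_pos (Finset.notMem_erase o v.1)]
    exact congrArg g (Subtype.ext (Finset.insert_erase hov))
  · have hW : (insert o v.1).card = m + 2 := by
      rw [Finset.card_insert_of_notMem hov, v.2]
    have h0 := hg ⟨insert o v.1, hW⟩
    rw [betaStar_apply_s13] at h0
    rw [← Finset.add_sum_erase _ _ (Finset.mem_insert_self o v.1)] at h0
    rw [Finset.erase_insert hov] at h0
    have hterm : ∀ c ∈ v.1, liftF (m+1) g ((insert o v.1).erase c)
        = liftF m (fun y => if h : o ∉ y.1 then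
          g ⟨insert o y.1, by rw [Finset.card_insert_of_notMem h, y.2]⟩ else 0)
          (v.1.erase c) := by
      intro c hc
      have hco : c ≠ o := fun h => hov (h ▸ hc)
      have he : (insert o v.1).erase c = insert o (v.1.erase c) := by
        ext z
        simp only [Finset.mem_erase, Finset.mem_insert]
        constructor
        · rintro ⟨hz, rfl | hz2⟩
          · exact Or.inl rfl
          · exact Or.inr ⟨hz, hz2⟩
        · rintro (rfl | ⟨hz, hz2⟩)
          · exact ⟨hco.symm, Or.inl rfl⟩
          · exact ⟨hz, Or.inr hz2⟩
      have hcard1 : ((insert o v.1).erase c).card = m + 1 := by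
        rw [Finset.card_erase_of_mem (Finset.mem_insert_of_mem hc), hW]; omega
      have hcard2 : (v.1.erase c).card = m := by
        rw [Finset.card_erase_of_mem hc, v.2]; omega
      have hno : o ∉ v.1.erase c := fun h => hov (Finset.mem_of_mem_erase h)
      rw [liftF_eq _ hcard1, liftF_eq _ hcard2, dif_pos hno]
      exact congrArg g (Subtype.ext he)
    rw [Finset.sum_congr rfl hterm] at h0
    have hgv : liftF (m+1) g v.1 = g v := by
      rw [liftF_eq _ v.2]
    rw [hgv] at h0
    have h2 := congrArg (fun z => g v + z) h0
    simp only [← add_assoc, zmod2_add_self, zero_add, add_zero] at h2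
    exact h2


/-- Modify a witness to vanish on subsets of `E` without changing its coboundary. -/
lemma vanish_witness (m : ℕ) (E : Finset Ω) (σ₀ : NSubsets Ω (m + 1) → ZMod 2)
    (h0 : ∀ v : NSubsets Ω (m + 2), v.1 ⊆ E → betaStar Ω (m + 2) (m + 1) σ₀ v = 0) :
    ∃ σ : NSubsets Ω (m + 1) → ZMod 2,
      (∀ v : NSubsets Ω (m + 2), betaStar Ω (m + 2) (m + 1) σ v
        = betaStar Ω (m + 2) (m + 1) σ₀ v) ∧
      (∀ y : NSubsets Ω (m + 1), y.1 ⊆ E → σ y = 0) := by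
  obtain ⟨τ, hτ, -⟩ := cone_s13 m E σ₀ h0
  refine ⟨σ₀ + betaStar Ω (m + 1) m τ, ?_, ?_⟩
  · intro v
    rw [map_add]
    have hz := betaStar_betaStar τ v
    simp only [Pi.add_apply, hz, add_zero]
  · intro y hy
    have := hτ y hy
    simp only [Pi.add_apply, this, zmod2_add_self]

/-- Gluing lemma: a common primitive on a union of at most `m + 1` simplexes. -/
lemma glue : ∀ (l : ℕ), ∀ (m : ℕ), l ≤ m + 1 →
    ∀ (F : Fin l → Finset Ω) (g : NSubsets Ω (m + 1) → ZMod 2),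
    (∀ i, ∀ w : NSubsets Ω (m + 2), w.1 ⊆ F i → betaStar Ω (m + 2) (m + 1) g w = 0) →
    ∃ s : NSubsets Ω m → ZMod 2,
      ∀ i, ∀ v : NSubsets Ω (m + 1), v.1 ⊆ F i → betaStar Ω (m + 1) m s v = g v := by
  intro l
  induction l with
  | zero => exact fun m _ F g _ => ⟨0, fun i => i.elim0⟩
  | succ l ih =>
    intro m hlm F g hg
    rcases Nat.eq_zero_or_pos l with rfl | hl
    · obtain ⟨s, hs, -⟩ := cone_s13 m (F 0) g (hg 0)
      refine ⟨s, fun i v hv => ?_⟩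
      have : i = 0 := by ext; omega
      subst this
      exact hs v hv
    · obtain ⟨m', rfl⟩ : ∃ m', m = m' + 1 := ⟨m - 1, by omega⟩
      obtain ⟨s', hs'⟩ := ih (m' + 1) (by omega) (fun i => F i.castSucc) g
        (fun i => hg i.castSucc)
      obtain ⟨s'', hs'', -⟩ := cone_s13 (m' + 1) (F (Fin.last l)) g (hg (Fin.last l))
      set d : NSubsets Ω (m' + 1) → ZMod 2 := s' + s'' with hd_def
      have hd : ∀ i : Fin l, ∀ v : NSubsets Ω (m' + 2),
          v.1 ⊆ F i.castSucc ∩ F (Fin.last l) → betaStar Ω (m' + 2) (m' + 1) d v = 0 := by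
        intro i v hv
        rw [hd_def, map_add]
        have h1 := hs' i v (hv.trans Finset.inter_subset_left)
        have h2 := hs'' v (hv.trans Finset.inter_subset_right)
        simp only [Pi.add_apply, h1, h2, zmod2_add_self]
      obtain ⟨t, ht⟩ := ih m' (by omega) (fun i => F i.castSucc ∩ F (Fin.last l)) d hd
      set φ : NSubsets Ω (m' + 1) → ZMod 2 := fun y =>
        if y.1 ⊆ F (Fin.last l) then 0 else d y + betaStar Ω (m' + 1) m' t y with hφ_def
      refine ⟨s'' + φ, ?_⟩
      have key : ∀ v : NSubsets Ω (m' + 2),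
          betaStar Ω (m' + 2) (m' + 1) (s'' + φ) v
            = betaStar Ω (m' + 2) (m' + 1) s'' v + betaStar Ω (m' + 2) (m' + 1) φ v := by
        intro v; rw [map_add]; rfl
      intro i v hv
      refine Fin.lastCases ?_ ?_ i hv
      · -- i = last
        intro hv'
        rw [key, hs'' v hv']
        have hzero : betaStar Ω (m' + 2) (m' + 1) φ v = 0 := by
          rw [betaStar_apply_s13]
          refine Finset.sum_eq_zero fun c hc => ?_
          have hcard : (v.1.erase c).card = m' + 1 := by
            rw [Finset.card_erase_of_mem hc, v.2]; omega
          rw [liftF_eq _ hcard]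
          have hsub : v.1.erase c ⊆ F (Fin.last l) := (Finset.erase_subset _ _).trans hv'
          show φ ⟨v.1.erase c, hcard⟩ = 0
          rw [hφ_def]
          simp only [if_pos hsub]
        rw [hzero, add_zero]
      · -- i = castSucc j
        intro j hv'
        have hφsplit : φ = (fun y => d y + betaStar Ω (m' + 1) m' t y)
            + (fun y => if y.1 ⊆ F (Fin.last l)
                then d y + betaStar Ω (m' + 1) m' t y else 0) := by
          funext y
          simp only [hφ_def, Pi.add_apply]
          by_cases h : y.1 ⊆ F (Fin.last l)
          · simp only [if_pos h, zero_add, zmod2_add_self]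
          · simp only [if_neg h, add_zero]
        have hX : betaStar Ω (m' + 2) (m' + 1)
            (fun y => d y + betaStar Ω (m' + 1) m' t y) v
              = betaStar Ω (m' + 2) (m' + 1) d v := by
          have : (fun y => d y + betaStar Ω (m' + 1) m' t y)
              = d + betaStar Ω (m' + 1) m' t := rfl
          rw [this, map_add]
          have hz := betaStar_betaStar t v
          simp only [Pi.add_apply, hz, add_zero]
        have hY : betaStar Ω (m' + 2) (m' + 1)
            (fun y => if y.1 ⊆ F (Fin.last l)
              then d y + betaStar Ω (m' + 1) m' t y else 0) v = 0 := by
          rw [betaStar_apply_s13]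
          refine Finset.sum_eq_zero fun c hc => ?_
          have hcard : (v.1.erase c).card = m' + 1 := by
            rw [Finset.card_erase_of_mem hc, v.2]; omega
          rw [liftF_eq _ hcard]
          show (if (v.1.erase c) ⊆ F (Fin.last l)
            then d ⟨v.1.erase c, hcard⟩
              + betaStar Ω (m' + 1) m' t ⟨v.1.erase c, hcard⟩ else 0) = 0
          by_cases h : v.1.erase c ⊆ F (Fin.last l)
          · rw [if_pos h]
            have hsub : v.1.erase c ⊆ F j.castSucc ∩ F (Fin.last l) :=
              Finset.subset_inter ((Finset.erase_subset _ _).trans hv') h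
            rw [ht j ⟨v.1.erase c, hcard⟩ hsub, zmod2_add_self]
          · rw [if_neg h]
        have hβφ : betaStar Ω (m' + 2) (m' + 1) φ v
            = betaStar Ω (m' + 2) (m' + 1) d v := by
          rw [hφsplit, map_add]
          simp only [Pi.add_apply, hX, hY, add_zero]
        rw [key, hβφ, hd_def, map_add]
        simp only [Pi.add_apply]
        rw [hs' j v hv', add_comm (g v) (betaStar Ω (m' + 1 + 1) (m' + 1) s'' v),
          ← add_assoc, zmod2_add_self, zero_add]


lemma VA_vanish {n : ℕ} {E : Finset Ω} {h : NSubsets Ω (n - 1) → ZMod 2}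
    (hh : h ∈ VA Ω n E) :
    ∀ w : NSubsets Ω (n - 1), w.1 ⊆ E → h w = 0 := by
  have hle : VA Ω n E ≤ ⨅ w ∈ {w : NSubsets Ω (n - 1) | w.1 ⊆ E},
      LinearMap.ker (LinearMap.proj (R := ZMod 2)
        (φ := fun _ : NSubsets Ω (n - 1) => ZMod 2) w) := by
    refine iSup₂_le fun B hB => le_iInf₂ fun w hw => ?_
    intro h' hh'
    have hne : w.1 ∩ E ≠ B := by
      intro hEq
      have h1 : w.1 ∩ E = w.1 := Finset.inter_eq_left.2 hw
      have h2 : B.card < n - 1 := hB.2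
      rw [h1] at hEq
      rw [← hEq, w.2] at h2
      omega
    exact hh' w hne
  intro w hw
  have := hle hh
  rw [Submodule.mem_iInf] at this
  have := this w
  rw [Submodule.mem_iInf] at this
  exact this hw

lemma vanish_VA {n : ℕ} {E : Finset Ω} {h : NSubsets Ω (n - 1) → ZMod 2}
    (hh : ∀ w : NSubsets Ω (n - 1), w.1 ⊆ E → h w = 0) :
    h ∈ VA Ω n E := by
  classical
  have hdecomp : h = ∑ B ∈ E.powerset.filter (fun B => B.card < n - 1),
      (fun w : NSubsets Ω (n - 1) => if w.1 ∩ E = B then h w else 0) := by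
    funext w
    rw [Finset.sum_apply]
    by_cases hc : (w.1 ∩ E).card < n - 1
    · rw [Finset.sum_eq_single (w.1 ∩ E)]
      · rw [if_pos rfl]
      · intro B hB hne
        exact if_neg (fun hEq => hne hEq.symm)
      · intro hB
        exfalso
        exact hB (Finset.mem_filter.2 ⟨Finset.mem_powerset.2 Finset.inter_subset_right, hc⟩)
    · have hcard : (w.1 ∩ E).card = n - 1 := by
        have h1 : (w.1 ∩ E).card ≤ w.1.card := Finset.card_le_card Finset.inter_subset_left
        rw [w.2] at h1
        omega
      have hwE : w.1 ⊆ E := by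
        have h3 : w.1 ∩ E = w.1 := Finset.eq_of_subset_of_card_le Finset.inter_subset_left
          (by rw [w.2, hcard])
        exact Finset.inter_eq_left.1 h3
      rw [hh w hwE]
      refine (Finset.sum_eq_zero fun B hB => ?_).symm
      refine if_neg fun hEq => ?_
      have := (Finset.mem_filter.1 hB).2
      rw [← hEq, hcard] at this
      omega
  rw [hdecomp]
  refine Submodule.sum_mem _ fun B hB => ?_
  have hBmem := Finset.mem_filter.1 hB
  have hBin : B ∈ {B : Finset Ω | B ⊆ E ∧ B.card < n - 1} :=
    ⟨Finset.mem_powerset.1 hBmem.1, hBmem.2⟩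
  refine Submodule.mem_iSup_of_mem B (Submodule.mem_iSup_of_mem hBin ?_)
  intro w hw
  exact if_neg hw


def cutF (N : ℕ) (D : Finset Ω) (u : NSubsets Ω (N + 1) → ZMod 2)
    (σ : NSubsets Ω N → ZMod 2) : NSubsets Ω (N + 1) → ZMod 2 := fun x =>
  if (x.1 ∩ D).card = 0 then u x
  else if h : (x.1 ∩ D).card = 1 then
    σ ⟨x.1 \ D, by
      have h2 := Finset.card_inter_add_card_sdiff x.1 D
      have h3 := x.2
      omega⟩
  else 0

variable {N : ℕ} {D : Finset Ω} {u : NSubsets Ω (N + 1) → ZMod 2}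
  {σ : NSubsets Ω N → ZMod 2}

lemma cutF_zero {x : NSubsets Ω (N + 1)} (h : (x.1 ∩ D).card = 0) :
    cutF N D u σ x = u x := by
  unfold cutF; rw [if_pos h]

lemma cutF_one {x : NSubsets Ω (N + 1)} (h : (x.1 ∩ D).card = 1)
    {y : NSubsets Ω N} (hy : y.1 = x.1 \ D) :
    cutF N D u σ x = σ y := by
  unfold cutF
  rw [if_neg (by omega), dif_pos h]
  exact congrArg σ (Subtype.ext hy.symm)

lemma cutF_big {x : NSubsets Ω (N + 1)} (h : 2 ≤ (x.1 ∩ D).card) :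
    cutF N D u σ x = 0 := by
  unfold cutF
  rw [if_neg (by omega), dif_neg (by omega)]

def barF (N : ℕ) (D : Finset Ω) (f : NSubsets Ω (N + 2) → ZMod 2)
    (G : NSubsets Ω (N + 1) → ZMod 2) : NSubsets Ω (N + 2) → ZMod 2 := fun ω =>
  if (ω.1 ∩ D).card = 0 then f ω
  else if h : (ω.1 ∩ D).card = 1 then
    G ⟨ω.1 \ D, by
      have h2 := Finset.card_inter_add_card_sdiff ω.1 D
      have h3 := ω.2
      omega⟩
  else 0

variable {f : NSubsets Ω (N + 2) → ZMod 2} {G : NSubsets Ω (N + 1) → ZMod 2}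

lemma barF_zero {ω : NSubsets Ω (N + 2)} (h : (ω.1 ∩ D).card = 0) :
    barF N D f G ω = f ω := by
  unfold barF; rw [if_pos h]

lemma barF_one {ω : NSubsets Ω (N + 2)} (h : (ω.1 ∩ D).card = 1)
    {y : NSubsets Ω (N + 1)} (hy : y.1 = ω.1 \ D) :
    barF N D f G ω = G y := by
  unfold barF
  rw [if_neg (by omega), dif_pos h]
  exact congrArg G (Subtype.ext hy.symm)

lemma barF_big {ω : NSubsets Ω (N + 2)} (h : 2 ≤ (ω.1 ∩ D).card) :
    barF N D f G ω = 0 := by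
  unfold barF
  rw [if_neg (by omega), dif_neg (by omega)]

lemma betaStar_cutF
    (hβg : betaStar Ω (N + 2) (N + 1) u = f)
    (hβσ : ∀ v : NSubsets Ω (N + 1), betaStar Ω (N + 1) N σ v = G v + u v)
    (ω : NSubsets Ω (N + 2)) :
    betaStar Ω (N + 2) (N + 1) (cutF N D u σ) ω = barF N D f G ω := by
  have hWcard : ω.1.card = N + 2 := ω.2
  have hcardE : ∀ c ∈ ω.1, (ω.1.erase c).card = N + 1 := fun c hc => by
    rw [Finset.card_erase_of_mem hc, hWcard]; omega
  have hsdcard := Finset.card_inter_add_card_sdiff ω.1 D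
  rw [betaStar_apply_s13, ← Finset.sum_inter_add_sum_sdiff ω.1 D
      (fun c => liftF (N + 1) (cutF N D u σ) (ω.1.erase c))]
  by_cases hJ0 : (ω.1 ∩ D).card = 0
  · have hJe : ω.1 ∩ D = ∅ := Finset.card_eq_zero.1 hJ0
    have hWD : ω.1 \ D = ω.1 := by
      rw [Finset.sdiff_eq_self_iff_disjoint, Finset.disjoint_iff_inter_eq_empty]
      exact hJe
    rw [hJe, Finset.sum_empty, zero_add, hWD]
    have hterm : ∀ c ∈ ω.1, liftF (N + 1) (cutF N D u σ) (ω.1.erase c)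
        = liftF (N + 1) u (ω.1.erase c) := by
      intro c hc
      rw [liftF_eq _ (hcardE c hc), liftF_eq _ (hcardE c hc)]
      refine cutF_zero ?_
      show ((ω.1.erase c) ∩ D).card = 0
      rw [Finset.erase_inter, hJe, Finset.erase_empty, Finset.card_empty]
    rw [Finset.sum_congr rfl hterm, ← betaStar_apply_s13, hβg, barF_zero hJ0]
  by_cases hJ1 : (ω.1 ∩ D).card = 1
  · obtain ⟨a, ha⟩ := Finset.card_eq_one.1 hJ1
    have haW : a ∈ ω.1 := (Finset.mem_inter.1 (ha ▸ Finset.mem_singleton_self a)).1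
    have haD : a ∈ D := (Finset.mem_inter.1 (ha ▸ Finset.mem_singleton_self a)).2
    have hWDcard : (ω.1 \ D).card = N + 1 := by omega
    set vD : NSubsets Ω (N + 1) := ⟨ω.1 \ D, hWDcard⟩ with hvD_def
    have hvD : ω.1.erase a = ω.1 \ D := by
      ext z
      simp only [Finset.mem_erase, Finset.mem_sdiff]
      constructor
      · rintro ⟨hne, hz⟩
        refine ⟨hz, fun hzD => hne ?_⟩
        have hm : z ∈ ω.1 ∩ D := Finset.mem_inter.2 ⟨hz, hzD⟩
        rw [ha, Finset.mem_singleton] at hm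
        exact hm
      · rintro ⟨hz, hzD⟩
        exact ⟨fun h => hzD (h ▸ haD), hz⟩
    have h1 : ∑ c ∈ ω.1 ∩ D, liftF (N + 1) (cutF N D u σ) (ω.1.erase c)
        = u vD := by
      rw [ha, Finset.sum_singleton, liftF_eq _ (hcardE a haW)]
      have h0 : ((ω.1.erase a) ∩ D).card = 0 := by
        rw [Finset.erase_inter, ha, Finset.erase_singleton, Finset.card_empty]
      rw [cutF_zero h0]
      exact congrArg u (Subtype.ext hvD)
    have h2 : ∑ c ∈ ω.1 \ D, liftF (N + 1) (cutF N D u σ) (ω.1.erase c)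
        = G vD + u vD := by
      have hterm : ∀ c ∈ ω.1 \ D, liftF (N + 1) (cutF N D u σ) (ω.1.erase c)
          = liftF N σ ((ω.1 \ D).erase c) := by
        intro c hc
        have hcW : c ∈ ω.1 := (Finset.mem_sdiff.1 hc).1
        have hcD : c ∉ D := (Finset.mem_sdiff.1 hc).2
        have hI : (ω.1.erase c) ∩ D = ω.1 ∩ D := by
          rw [Finset.erase_inter]
          exact Finset.erase_eq_of_notMem fun hcI => hcD (Finset.mem_inter.1 hcI).2
        have hEc : (ω.1 \ D).erase c = (ω.1.erase c) \ D := by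
          ext z
          simp only [Finset.mem_erase, Finset.mem_sdiff]
          tauto
        have hcard2 : ((ω.1 \ D).erase c).card = N := by
          rw [Finset.card_erase_of_mem hc, hWDcard]; omega
        rw [liftF_eq _ (hcardE c hcW), liftF_eq _ hcard2]
        exact cutF_one (by rw [hI]; exact hJ1) hEc
      rw [Finset.sum_congr rfl hterm]
      have hb : ∑ c ∈ ω.1 \ D, liftF N σ ((ω.1 \ D).erase c)
          = betaStar Ω (N + 1) N σ vD := (betaStar_apply_s13 σ vD).symm
      rw [hb, hβσ]
    rw [h1, h2, add_comm (G vD) (u vD), ← add_assoc, zmod2_add_self, zero_add,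
      barF_one (f := f) hJ1 (show vD.1 = ω.1 \ D from rfl)]
  · have hJ2 : 2 ≤ (ω.1 ∩ D).card := by omega
    have h2 : ∑ c ∈ ω.1 \ D, liftF (N + 1) (cutF N D u σ) (ω.1.erase c) = 0 := by
      refine Finset.sum_eq_zero fun c hc => ?_
      have hcW : c ∈ ω.1 := (Finset.mem_sdiff.1 hc).1
      have hcD : c ∉ D := (Finset.mem_sdiff.1 hc).2
      have hI : (ω.1.erase c) ∩ D = ω.1 ∩ D := by
        rw [Finset.erase_inter]
        exact Finset.erase_eq_of_notMem fun hcI => hcD (Finset.mem_inter.1 hcI).2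
      rw [liftF_eq _ (hcardE c hcW)]
      exact cutF_big (by rw [hI]; omega)
    by_cases hJe2 : (ω.1 ∩ D).card = 2
    · have hWDcard : (ω.1 \ D).card = N := by omega
      have hterm : ∀ c ∈ ω.1 ∩ D, liftF (N + 1) (cutF N D u σ) (ω.1.erase c)
          = σ ⟨ω.1 \ D, hWDcard⟩ := by
        intro c hc
        have hcW : c ∈ ω.1 := (Finset.mem_inter.1 hc).1
        have hcD : c ∈ D := (Finset.mem_inter.1 hc).2
        have hI : ((ω.1.erase c) ∩ D).card = 1 := by
          rw [Finset.erase_inter, Finset.card_erase_of_mem hc, hJe2]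
        have hEc : ω.1 \ D = (ω.1.erase c) \ D := by
          ext z
          simp only [Finset.mem_erase, Finset.mem_sdiff]
          constructor
          · rintro ⟨hz, hzD⟩
            refine ⟨⟨?_, hz⟩, hzD⟩
            rintro rfl; exact hzD hcD
          · rintro ⟨⟨_, hz⟩, hzD⟩; exact ⟨hz, hzD⟩
        rw [liftF_eq _ (hcardE c hcW)]
        exact cutF_one hI hEc
      rw [Finset.sum_congr rfl hterm, Finset.sum_const, hJe2, h2, add_zero]
      have h3 : (2 : ℕ) • σ ⟨ω.1 \ D, hWDcard⟩ = 0 := by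
        rw [two_nsmul, zmod2_add_self]
      rw [h3, barF_big hJ2]
    · have h1 : ∑ c ∈ ω.1 ∩ D, liftF (N + 1) (cutF N D u σ) (ω.1.erase c) = 0 := by
        refine Finset.sum_eq_zero fun c hc => ?_
        have hcW : c ∈ ω.1 := (Finset.mem_inter.1 hc).1
        have hI : ((ω.1.erase c) ∩ D).card = (ω.1 ∩ D).card - 1 := by
          rw [Finset.erase_inter, Finset.card_erase_of_mem hc]
        rw [liftF_eq _ (hcardE c hcW)]
        exact cutF_big (x := ⟨ω.1.erase c, hcardE c hcW⟩)
          (show 2 ≤ ((ω.1.erase c) ∩ D).card by omega)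
      rw [h1, h2, add_zero, barF_big hJ2]


lemma final_assembly (K : ℕ) (E E' : Fin (K + 1) → Finset Ω)
    (g : Fin (K + 1) → NSubsets Ω (N + 1) → ZMod 2)
    (σs : Fin (K + 1) → NSubsets Ω N → ZMod 2)
    (hgβ : ∀ i, betaStar Ω (N + 2) (N + 1) (g i) = f)
    (hgvan : ∀ i, ∀ w : NSubsets Ω (N + 1), w.1 ⊆ E i → g i w = 0)
    (hσβ : ∀ i, ∀ v : NSubsets Ω (N + 1),
      betaStar Ω (N + 1) N (σs i) v = G v + g i v)
    (hσvan : ∀ i, ∀ y : NSubsets Ω N, y.1 ⊆ E i → σs i y = 0)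
    (hE'1 : ∀ i, ∀ x : Finset Ω, x ⊆ E' i → x ∩ D = ∅ → x ⊆ E i)
    (hE'2 : ∀ i, ∀ x : Finset Ω, x ⊆ E' i → x \ D ⊆ E i)
    (i : Fin (K + 1)) :
    barF N D f G ∈ WA Ω (N + 2) (E' i) := by
  refine Submodule.mem_map.2 ⟨cutF N D (g i) (σs i), ?_, ?_⟩
  · refine vanish_VA (n := N + 2) ?_
    intro x hx
    by_cases h0 : (x.1 ∩ D).card = 0
    · rw [cutF_zero h0]
      exact hgvan i x (hE'1 i x.1 hx (Finset.card_eq_zero.1 h0))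
    · by_cases h1 : (x.1 ∩ D).card = 1
      · have hcard : (x.1 \ D).card = N := by
          have h2 := Finset.card_inter_add_card_sdiff x.1 D
          have h3 := x.2
          omega
        rw [cutF_one h1 (show (⟨x.1 \ D, hcard⟩ : NSubsets Ω N).1 = x.1 \ D from rfl)]
        exact hσvan i ⟨x.1 \ D, hcard⟩ (hE'2 i x.1 hx)
      · rw [cutF_big (by omega)]
  · funext ω
    exact betaStar_cutF (hgβ i) (hσβ i) ω

end Aux

/-- Let `1 ≤ k ≤ n`, let `A₁, …, A_k` be finite subsets of `Ω` and
`U = A₁ ∪ … ∪ A_{k-1}`. Every `f ∈ ⋂_{i<k-1} W_{U∖Aᵢ}` agrees on `[U]^n` with some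
`f̄ ∈ ⋂_{i<k-1} W_{(U∪A_k)∖Aᵢ}`. -/
theorem WA_intersections_same_action
    (Ω : Type) [Countable Ω] [Infinite Ω] [DecidableEq Ω] (n k : ℕ)
    (hk1 : 1 ≤ k) (hkn : k ≤ n) (A : Fin k → Finset Ω) (U : Finset Ω)
    (hU : U = (Finset.univ : Finset (Fin (k - 1))).sup
      (fun j => A (Fin.castLE (Nat.sub_le k 1) j))) :
    ∀ f ∈ ⨅ i : Fin (k - 1), WA Ω n (U \ A (Fin.castLE (Nat.sub_le k 1) i)),
      ∃ fbar ∈ ⨅ i : Fin (k - 1),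
          WA Ω n ((U ∪ A ⟨k - 1, by omega⟩) \ A (Fin.castLE (Nat.sub_le k 1) i)),
        ∀ w : NSubsets Ω n, w.1 ⊆ U → f w = fbar w := by
  intro f hf
  by_cases hk' : k = 1
  · subst hk'
    exact ⟨f, (Submodule.mem_iInf _).2 fun i => i.elim0, fun w _ => rfl⟩
  · obtain ⟨K, rfl⟩ : ∃ K, k = K + 2 := ⟨k - 2, by omega⟩
    obtain ⟨N, rfl⟩ : ∃ N, n = N + 2 := ⟨n - 2, by omega⟩
    have hKN : K ≤ N := by omega
    have hmem : ∀ i : Fin (K + 1),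
        f ∈ WA Ω (N + 2) (U \ A (Fin.castLE (Nat.sub_le (K + 2) 1) i)) :=
      fun i => (Submodule.mem_iInf _).1 hf i
    choose g hgV hgβ using fun i => Submodule.mem_map.1 (hmem i)
    have hgβ' : ∀ i : Fin (K + 1), betaStar Ω (N + 2) (N + 1) (g i) = f :=
      fun i => hgβ i
    have hgvan : ∀ i : Fin (K + 1), ∀ w : NSubsets Ω (N + 1),
        w.1 ⊆ U \ A (Fin.castLE (Nat.sub_le (K + 2) 1) i) → g i w = 0 :=
      fun i => VA_vanish (hgV i)
    have hfvan : ∀ i : Fin (K + 1), ∀ w : NSubsets Ω (N + 2),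
        w.1 ⊆ U \ A (Fin.castLE (Nat.sub_le (K + 2) 1) i) → f w = 0 := by
      intro i w hw
      rw [← hgβ' i, betaStar_apply_s13]
      refine Finset.sum_eq_zero fun c hc => ?_
      have hcard : (w.1.erase c).card = N + 1 := by
        rw [Finset.card_erase_of_mem hc, w.2]; omega
      rw [liftF_eq _ hcard]
      exact hgvan i ⟨_, hcard⟩ ((Finset.erase_subset _ _).trans hw)
    have hg0β : ∀ i : Fin (K + 1), ∀ w : NSubsets Ω (N + 2),
        w.1 ⊆ U \ A (Fin.castLE (Nat.sub_le (K + 2) 1) i) →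
          betaStar Ω (N + 2) (N + 1) (g 0) w = 0 := by
      intro i w hw
      rw [hgβ' 0]
      exact hfvan i w hw
    obtain ⟨s, hs, hsvan⟩ : ∃ s : NSubsets Ω N → ZMod 2,
        (∀ i : Fin (K + 1), ∀ v : NSubsets Ω (N + 1),
          v.1 ⊆ U \ A (Fin.castLE (Nat.sub_le (K + 2) 1) i) →
            betaStar Ω (N + 1) N s v = g 0 v) ∧
        (K = 0 → ∀ y : NSubsets Ω N,
          y.1 ⊆ U \ A (Fin.castLE (Nat.sub_le (K + 2) 1) (0 : Fin (K + 1))) → s y = 0) := by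
      rcases Nat.eq_zero_or_pos K with hK0 | hKpos
      · obtain ⟨s0, hs0, hs0v⟩ := cone_s13 N
          (U \ A (Fin.castLE (Nat.sub_le (K + 2) 1) (0 : Fin (K + 1)))) (g 0) (hg0β 0)
        refine ⟨s0, ?_, fun _ => hs0v (fun v hv => hgvan 0 v hv)⟩
        intro i v hv
        have hi : i = 0 := Fin.ext (by have := i.isLt; omega)
        rw [hi] at hv
        exact hs0 v hv
      · obtain ⟨s, hs⟩ := glue (K + 1) N (by omega)
          (fun i => U \ A (Fin.castLE (Nat.sub_le (K + 2) 1) i)) (g 0) hg0β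
        exact ⟨s, hs, fun h0 => absurd h0 (by omega)⟩
    have hσ : ∀ i : Fin (K + 1), ∃ σi : NSubsets Ω N → ZMod 2,
        (∀ v : NSubsets Ω (N + 1), betaStar Ω (N + 1) N σi v
          = (g 0 v + betaStar Ω (N + 1) N s v) + g i v) ∧
        (∀ y : NSubsets Ω N,
          y.1 ⊆ U \ A (Fin.castLE (Nat.sub_le (K + 2) 1) i) → σi y = 0) := by
      intro i
      rcases Nat.eq_zero_or_pos K with hK0 | hKpos
      · have hi : i = 0 := Fin.ext (by have := i.isLt; omega)
        subst hi
        refine ⟨s, fun v => ?_, hsvan hK0⟩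
        rw [add_comm (g 0 v) (betaStar Ω (N + 1) N s v), add_assoc, zmod2_add_self,
          add_zero]
      · obtain ⟨M, rfl⟩ : ∃ M, N = M + 1 := ⟨N - 1, by omega⟩
        have hker : ∀ w : NSubsets Ω (M + 1 + 2),
            betaStar Ω (M + 1 + 2) (M + 1 + 1) (g 0 + g i) w = 0 := by
          intro w
          rw [map_add]
          have h1 : betaStar Ω (M + 1 + 2) (M + 1 + 1) (g 0) w = f w := congrFun (hgβ' 0) w
          have h2 : betaStar Ω (M + 1 + 2) (M + 1 + 1) (g i) w = f w := congrFun (hgβ' i) w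
          simp only [Pi.add_apply, h1, h2, zmod2_add_self]
        obtain ⟨t, ht⟩ := exact_global (M + 1) (Classical.arbitrary Ω) (g 0 + g i) hker
        have hβσ₀ : ∀ v : NSubsets Ω (M + 2),
            betaStar Ω (M + 2) (M + 1) (t + s) v
              = (g 0 v + betaStar Ω (M + 2) (M + 1) s v) + g i v := by
          intro v
          rw [map_add]
          simp only [Pi.add_apply]
          rw [ht v]
          simp only [Pi.add_apply]
          ring
        have h0 : ∀ v : NSubsets Ω (M + 2),
            v.1 ⊆ U \ A (Fin.castLE (Nat.sub_le (K + 2) 1) i) →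
              betaStar Ω (M + 2) (M + 1) (t + s) v = 0 := by
          intro v hv
          rw [hβσ₀ v, hs i v hv, hgvan i v hv, add_zero, zmod2_add_self]
        obtain ⟨σi, hσβ', hσvan'⟩ := vanish_witness M
          (U \ A (Fin.castLE (Nat.sub_le (K + 2) 1) i)) (t + s) h0
        exact ⟨σi, fun v => (hσβ' v).trans (hβσ₀ v), hσvan'⟩
    choose σs hσβ hσvan using hσ
    have hDdef : ∀ z, z ∈ A (⟨K + 1, by omega⟩ : Fin (K + 2)) \ U ↔
        z ∈ A (⟨K + 2 - 1, by omega⟩ : Fin (K + 2)) \ U := fun z => Iff.rfl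
    refine ⟨barF N (A (⟨K + 1, by omega⟩ : Fin (K + 2)) \ U) f
      (fun v => g 0 v + betaStar Ω (N + 1) N s v), ?_, ?_⟩
    · refine (Submodule.mem_iInf _).2 fun i => ?_
      refine final_assembly K
        (fun i => U \ A (Fin.castLE (Nat.sub_le (K + 2) 1) i))
        (fun i => (U ∪ A (⟨K + 1, by omega⟩ : Fin (K + 2)))
          \ A (Fin.castLE (Nat.sub_le (K + 2) 1) i))
        g σs hgβ' hgvan hσβ hσvan ?_ ?_ i
      · -- hE'1
        intro j x hx hxD z hz
        have hz1 := hx hz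
        rw [Finset.mem_sdiff, Finset.mem_union] at hz1
        rw [Finset.mem_sdiff]
        refine ⟨?_, hz1.2⟩
        rcases hz1.1 with hzU | hzA
        · exact hzU
        · by_contra hzU
          have : z ∈ x ∩ (A (⟨K + 1, by omega⟩ : Fin (K + 2)) \ U) :=
            Finset.mem_inter.2 ⟨hz, Finset.mem_sdiff.2 ⟨hzA, hzU⟩⟩
          rw [hxD] at this
          exact absurd this (Finset.notMem_empty z)
      · -- hE'2
        intro j x hx z hz
        rw [Finset.mem_sdiff] at hz
        have hz1 := hx hz.1
        rw [Finset.mem_sdiff, Finset.mem_union] at hz1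
        rw [Finset.mem_sdiff]
        refine ⟨?_, hz1.2⟩
        rcases hz1.1 with hzU | hzA
        · exact hzU
        · by_contra hzU
          exact hz.2 (Finset.mem_sdiff.2 ⟨hzA, hzU⟩)
    · intro w hw
      have hwD : (w.1 ∩ (A (⟨K + 1, by omega⟩ : Fin (K + 2)) \ U)).card = 0 := by
        rw [Finset.card_eq_zero, Finset.eq_empty_iff_forall_notMem]
        intro z hzm
        rw [Finset.mem_inter, Finset.mem_sdiff] at hzm
        exact hzm.2.2 (hw hzm.1)
      exact (barF_zero hwD).symm
end

section
/- Let n ≥ 2 be an integer and let c_1, …, c_{n+1} be pairwise distinct elements of Ω. If f lies in the image of β*_{n,n-1} : F_2^{[Ω]^{n-1}} → F_2^{[Ω]^n} and f({c_1,…,c_{n+1}}∖{c_i}) = 0 for every i ∈ {1,…,n}, then f({c_1,…,c_n}) = 0. -/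
/-!
Write `f = β*_{n,n-1} g`. Summing `f` over all `n + 1` faces of `{c₁, …, c_{n+1}}` counts each
`(n - 1)`-subset twice, once for each of the two points it misses, so the sum vanishes over `F₂`.
All faces but `{c₁, …, c_n}` contribute zero by hypothesis, hence so does that one.
-/

open Finset

def extendByZero {Ω M : Type*} [Zero M] {j : ℕ} (g : NSubsets Ω j → M) (x : Finset Ω) : M :=
  if h : x.card = j then g ⟨x, h⟩ else 0

theorem extendByZero_apply {Ω M : Type*} [Zero M] {j : ℕ} (g : NSubsets Ω j → M)
    (x : NSubsets Ω j) : extendByZero g x.1 = g x :=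
  dif_pos x.2

theorem betaStar_apply_eq_sum {Ω : Type*} {m j : ℕ} (g : NSubsets Ω j → ZMod 2)
    (s : NSubsets Ω m) :
    betaStar Ω m j g s = ∑ x ∈ powersetCard j s.1, extendByZero g x := by
  rw [← sum_attach]
  exact sum_congr rfl fun x _ => (extendByZero_apply g _).symm

/-- Each `j`-subset `x` of `C` lies in `C.erase a` for exactly the `#C - j` points
`a ∈ C \ x`. -/
theorem sum_sum_powersetCard_erase {α M : Type*} [DecidableEq α] [AddCommMonoid M]
    (C : Finset α) (j : ℕ) (G : Finset α → M) :
    ∑ a ∈ C, ∑ x ∈ powersetCard j (C.erase a), G x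
      = (C.card - j) • ∑ x ∈ powersetCard j C, G x := by
  have herase : ∀ a, powersetCard j (C.erase a) = (powersetCard j C).filter (a ∉ ·) := by
    intro a
    ext x
    simp only [mem_powersetCard, mem_filter, subset_erase]
    tauto
  calc ∑ a ∈ C, ∑ x ∈ powersetCard j (C.erase a), G x
      = ∑ x ∈ powersetCard j C, ∑ a ∈ C, if a ∉ x then G x else 0 := by
        simp_rw [herase, sum_filter]
        exact sum_comm
    _ = ∑ x ∈ powersetCard j C, (C.card - j) • G x := by
        refine sum_congr rfl fun x hx => ?_
        obtain ⟨hxC, hxcard⟩ := mem_powersetCard.mp hx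
        rw [← sum_filter, sum_const, filter_notMem_eq_sdiff, card_sdiff_of_subset hxC,
          hxcard]
    _ = (C.card - j) • ∑ x ∈ powersetCard j C, G x := (smul_sum ..).symm

theorem sum_betaStar_faces_eq_zero {Ω : Type*} [DecidableEq Ω] {m : ℕ} (hm : 1 ≤ m)
    (g : NSubsets Ω (m - 1) → ZMod 2) (C : Finset Ω) (hC : C.card = m + 1) :
    ∑ a ∈ C, extendByZero (betaStar Ω m (m - 1) g) (C.erase a) = 0 := by
  have hface : ∀ a ∈ C, extendByZero (betaStar Ω m (m - 1) g) (C.erase a)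
      = ∑ x ∈ powersetCard (m - 1) (C.erase a), extendByZero g x := by
    intro a ha
    have hcard : (C.erase a).card = m := by rw [card_erase_of_mem ha, hC]; rfl
    exact (extendByZero_apply _ ⟨_, hcard⟩).trans (betaStar_apply_eq_sum g ⟨_, hcard⟩)
  rw [sum_congr rfl hface, sum_sum_powersetCard_erase, hC,
    show m + 1 - (m - 1) = 2 by omega, two_nsmul, CharTwo.add_self_eq_zero]

theorem Fin.image_comp_castSucc_eq_erase {α : Type*} [DecidableEq α] {n : ℕ}
    {c : Fin (n + 1) → α} (hc : Function.Injective c) :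
    univ.image (fun j : Fin n => c j.castSucc) = (univ.image c).erase (c (Fin.last n)) := by
  rw [← image_erase hc, ← compl_singleton, ← Fin.image_castSucc, image_image]
  rfl

/-- Let `n ≥ 2` and let `c₁, …, c_{n+1}` be pairwise distinct elements of `Ω`. If `f`
lies in the image of `β*_{n,n-1}` and `f({c₁,…,c_{n+1}}∖{cᵢ}) = 0` for every
`i ∈ {1,…,n}`, then `f({c₁,…,c_n}) = 0`. -/
theorem vanishing_on_faces
    (Ω : Type) [DecidableEq Ω] (n : ℕ) (hn : 2 ≤ n)
    (c : Fin (n + 1) → Ω) (hc : Function.Injective c)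
    (f : NSubsets Ω n → ZMod 2)
    (hf : f ∈ LinearMap.range (betaStar Ω n (n - 1)))
    (h0 : ∀ i : Fin (n + 1), (i : ℕ) < n →
      f ⟨(Finset.univ.image c).erase (c i), by
        rw [Finset.card_erase_of_mem (Finset.mem_image_of_mem c (Finset.mem_univ i)),
          Finset.card_image_of_injective _ hc, Finset.card_univ, Fintype.card_fin]
        omega⟩ = 0) :
    f ⟨Finset.univ.image (fun j : Fin n => c (Fin.castSucc j)), by
      rw [Finset.card_image_of_injective _
          (fun a b hab => Fin.castSucc_injective n (hc hab) :
            Function.Injective fun j : Fin n => c (Fin.castSucc j)),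
        Finset.card_univ, Fintype.card_fin]⟩ = 0 := by
  obtain ⟨g, rfl⟩ := hf
  set F := extendByZero (betaStar Ω n (n - 1) g)
  have hsum : ∑ i : Fin (n + 1), F ((univ.image c).erase (c i)) = 0 := by
    rw [← sum_image (f := fun a => F ((univ.image c).erase a)) fun i _ j _ h => hc h]
    exact sum_betaStar_faces_eq_zero (by omega) g _ (by simp [card_image_of_injective _ hc])
  have hfirst : ∀ i : Fin n, F ((univ.image c).erase (c i.castSucc)) = 0 := fun i =>
    (extendByZero_apply _ _).trans (h0 i.castSucc i.castSucc_lt_last)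
  rw [Fin.sum_univ_castSucc, sum_eq_zero fun i _ => hfirst i, zero_add] at hsum
  rw [← extendByZero_apply (betaStar Ω n (n - 1) g)]
  change F (univ.image fun j : Fin n => c j.castSucc) = 0
  rwa [Fin.image_comp_castSucc_eq_erase hc]
end
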